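/- arXiv:2601.06913 — 12 statements merged into one kernel-verified Lean document; each statement's English description precedes it below -/
import Mathlib

section
/- Reverse Lipschitzness of the MNL model: Let d ≥ 1, let C > 0, and let A = {a ∈ ℝ^d : ‖a‖₂ ≤ C} be the closed Euclidean ball of radius C. Define h : ℝ^d → ℝ^d by h_i(a) = exp(a_i) / (1 + ∑_{j=1}^d exp(a_j)) for each i ∈ {1,…,d}. Let κ₀ > 0 be any constant such that h_i(a) · (1 − ∑_{j=1}^d h_j(a)) ≥ κ₀ for every a ∈ A and every i ∈ {1,…,d}. Then for all a, b ∈ A, ‖h(a) − h(b)‖₂ ≥ κ₀ ‖a − b‖₂. -/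
/-!
With `v = a - b`, the derivative of `t ↦ ⟪h (b + t • v), v⟫` is `vᵀ J v`, where `J = diag q - q qᵀ`
is the Jacobian of `h` at `b + t • v` and `q = h (b + t • v)`. The weighted Cauchy–Schwarz inequality
`(∑ qᵢ vᵢ)² ≤ (∑ qᵢ) ∑ qᵢ vᵢ²` gives `vᵀ J v ≥ (1 - ∑ qⱼ) ∑ qᵢ vᵢ² ≥ κ₀ ‖v‖²` as long as the segment
stays in the ball. Integrating over `[0, 1]` gives `⟪h a - h b, v⟫ ≥ κ₀ ‖v‖²`, and Cauchy–Schwarz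
turns this strong monotonicity into the reverse Lipschitz bound.
-/

open Finset Real

open scoped RealInnerProductSpace

theorem mul_norm_le_norm_of_mul_norm_sq_le_inner {E : Type*} [NormedAddCommGroup E]
    [InnerProductSpace ℝ E] {κ : ℝ} {u w : E} (h : κ * ‖u‖ ^ 2 ≤ ⟪w, u⟫) : κ * ‖u‖ ≤ ‖w‖ := by
  rcases (norm_nonneg u).eq_or_lt with hu | hu
  · simp [← hu]
  · refine le_of_mul_le_mul_right ?_ hu
    calc κ * ‖u‖ * ‖u‖ = κ * ‖u‖ ^ 2 := by ring
      _ ≤ ⟪w, u⟫ := h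
      _ ≤ ‖w‖ * ‖u‖ := real_inner_le_norm w u

theorem mul_sum_sq_le_sum_mul_sq_sub_sq {ι : Type*} [Fintype ι] {κ : ℝ} {q : ι → ℝ}
    (hq : ∀ i, 0 ≤ q i) (hκ : ∀ i, κ ≤ q i * (1 - ∑ j, q j)) (v : ι → ℝ) :
    κ * ∑ i, v i ^ 2 ≤ ∑ i, q i * v i ^ 2 - (∑ i, q i * v i) ^ 2 := by
  have cauchy_schwarz : (∑ i, q i * v i) ^ 2 ≤ (∑ i, q i) * ∑ i, q i * v i ^ 2 :=
    sum_sq_le_sum_mul_sum_of_sq_le_mul _ (fun i _ => hq i)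
      (fun i _ => mul_nonneg (hq i) (sq_nonneg _)) (fun i _ => le_of_eq (by ring))
  have pointwise : κ * ∑ i, v i ^ 2 ≤ (1 - ∑ j, q j) * ∑ i, q i * v i ^ 2 := by
    rw [mul_sum, mul_sum]
    exact sum_le_sum fun i _ => by linear_combination (v i ^ 2) * hκ i
  linear_combination pointwise + cauchy_schwarz

section MultinomialLogit

variable {ι : Type*} [Fintype ι]

noncomputable def mnl (a : EuclideanSpace ℝ ι) : EuclideanSpace ℝ ι :=
  WithLp.toLp 2 fun i => exp (a i) / (1 + ∑ j, exp (a j))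

theorem mnl_apply (a : EuclideanSpace ℝ ι) (i : ι) :
    mnl a i = exp (a i) / (1 + ∑ j, exp (a j)) := rfl

theorem mnl_nonneg (a : EuclideanSpace ℝ ι) (i : ι) : 0 ≤ mnl a i := by
  rw [mnl_apply]
  positivity

theorem hasDerivAt_mnl_line (x v : EuclideanSpace ℝ ι) (i : ι) (t : ℝ) :
    HasDerivAt (fun s => mnl (x + s • v) i)
      (mnl (x + t • v) i * (v i - ∑ j, mnl (x + t • v) j * v j)) t := by
  have hexp : ∀ j, HasDerivAt (fun s => exp (x j + s * v j)) (exp (x j + t * v j) * v j) t :=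
    fun j => ((hasDerivAt_mul_const (v j)).const_add (x j)).exp
  have hS : 0 < 1 + ∑ j, exp (x j + t * v j) := by positivity
  simp only [mnl_apply, PiLp.add_apply, PiLp.smul_apply, smul_eq_mul]
  refine ((hexp i).fun_div ((HasDerivAt.fun_sum fun j _ => hexp j).const_add 1) hS.ne').congr_deriv ?_
  simp only [div_mul_eq_mul_div, ← sum_div]
  field_simp

theorem hasDerivAt_inner_mnl_line (x v : EuclideanSpace ℝ ι) (t : ℝ) :
    HasDerivAt (fun s => ⟪mnl (x + s • v), v⟫)
      (∑ i, mnl (x + t • v) i * v i ^ 2 - (∑ i, mnl (x + t • v) i * v i) ^ 2) t := by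
  simp only [PiLp.inner_apply, RCLike.inner_apply, conj_trivial]
  refine (HasDerivAt.fun_sum (u := univ) fun i _ =>
    (hasDerivAt_mnl_line x v i t).const_mul (v i)).congr_deriv ?_
  simp only [mul_sub, ← mul_assoc, sum_sub_distrib, ← sum_mul, sq]
  congr 1
  · exact sum_congr rfl fun i _ => by ring
  · simp only [mul_comm (v _)]

theorem mul_norm_sub_sq_le_inner_mnl_sub {s : Set (EuclideanSpace ℝ ι)} (hs : Convex ℝ s)
    {κ : ℝ} (hκ : ∀ x ∈ s, ∀ i, κ ≤ mnl x i * (1 - ∑ j, mnl x j)) {x y : EuclideanSpace ℝ ι}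
    (hx : x ∈ s) (hy : y ∈ s) : κ * ‖x - y‖ ^ 2 ≤ ⟪mnl x - mnl y, x - y⟫ := by
  set v := x - y
  have hderiv := hasDerivAt_inner_mnl_line y v
  have hslope : ∀ t ∈ interior (Set.Icc (0 : ℝ) 1), κ * ‖v‖ ^ 2 ≤
      deriv (fun s => ⟪mnl (y + s • v), v⟫) t := by
    intro t ht
    rw [(hderiv t).deriv, EuclideanSpace.real_norm_sq_eq]
    exact mul_sum_sq_le_sum_mul_sq_sub_sq (mnl_nonneg _)
      (hκ _ (hs.add_smul_sub_mem hy hx (interior_subset ht))) _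
  have := (convex_Icc (0 : ℝ) 1).mul_sub_le_image_sub_of_le_deriv
    (fun t _ => (hderiv t).continuousAt.continuousWithinAt)
    (fun t _ => (hderiv t).differentiableAt.differentiableWithinAt) hslope
    0 (by simp) 1 (by simp) zero_le_one
  simpa [v, inner_sub_left] using this

end MultinomialLogit

theorem reverse_lipschitz_mnl_general
    (d : ℕ) (C : ℝ)
    (h : EuclideanSpace ℝ (Fin d) → EuclideanSpace ℝ (Fin d))
    (hh : ∀ (a : EuclideanSpace ℝ (Fin d)) (i : Fin d),
      h a i = Real.exp (a i) / (1 + ∑ j, Real.exp (a j)))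
    (κ₀ : ℝ)
    (hκ : ∀ a : EuclideanSpace ℝ (Fin d), ‖a‖ ≤ C →
      ∀ i : Fin d, κ₀ ≤ h a i * (1 - ∑ j, h a j))
    (a b : EuclideanSpace ℝ (Fin d)) (ha : ‖a‖ ≤ C) (hb : ‖b‖ ≤ C) :
    κ₀ * ‖a - b‖ ≤ ‖h a - h b‖ := by
  obtain rfl : h = mnl := funext fun x => PiLp.ext (hh x)
  refine mul_norm_le_norm_of_mul_norm_sq_le_inner ?_
  exact mul_norm_sub_sq_le_inner_mnl_sub (convex_closedBall 0 C)
    (fun x hx => hκ x (mem_closedBall_zero_iff.mp hx))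
    (mem_closedBall_zero_iff.mpr ha) (mem_closedBall_zero_iff.mpr hb)

/-- **Reverse Lipschitzness of the MNL model.**
For `d ≥ 1`, `C > 0`, and `h` the multinomial-logit map
`h_i(a) = exp(a_i) / (1 + ∑_j exp(a_j))`, if `κ₀ > 0` satisfies
`h_i(a) * (1 - ∑_j h_j(a)) ≥ κ₀` for every `a` in the closed Euclidean ball
of radius `C` and every coordinate `i`, then `h` is reverse-Lipschitz with
constant `κ₀` on that ball. -/
theorem reverse_lipschitz_mnl
    (d : ℕ) (hd : 1 ≤ d) (C : ℝ) (hC : 0 < C)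
    (h : EuclideanSpace ℝ (Fin d) → EuclideanSpace ℝ (Fin d))
    (hh : ∀ (a : EuclideanSpace ℝ (Fin d)) (i : Fin d),
      h a i = Real.exp (a i) / (1 + ∑ j, Real.exp (a j)))
    (κ₀ : ℝ) (hκpos : 0 < κ₀)
    (hκ : ∀ a : EuclideanSpace ℝ (Fin d), ‖a‖ ≤ C →
      ∀ i : Fin d, κ₀ ≤ h a i * (1 - ∑ j, h a j))
    (a b : EuclideanSpace ℝ (Fin d)) (ha : ‖a‖ ≤ C) (hb : ‖b‖ ≤ C) :
    κ₀ * ‖a - b‖ ≤ ‖h a - h b‖ :=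
  reverse_lipschitz_mnl_general d C h hh κ₀ hκ a b ha hb
end

section
/- Let K ≥ 1, let p ∈ ℝ^K satisfy p_i ≥ 0 for all i and ∑_{i=1}^K p_i ≤ 1, let g_1, …, g_K ∈ ℝ^n be arbitrary vectors, and let κ ≥ 0 satisfy κ ≤ p_i (1 − ∑_{j=1}^K p_j) for every i ∈ {1,…,K}. Then, in the Loewner order on symmetric n×n matrices, ∑_{i=1}^K p_i g_i g_iᵀ − (∑_{i=1}^K p_i g_i)(∑_{i=1}^K p_i g_i)ᵀ ⪰ κ ∑_{i=1}^K g_i g_iᵀ. -/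
/-!
With `S = ∑ p_i` and `m = ∑ p_i g_i`, the matrix splits as
`∑_i (p_i (1 - S) - κ) g_i g_iᵀ + (S ∑_i p_i g_i g_iᵀ - m mᵀ)`.
The first summand is positive semidefinite by the bound on `κ`; the second is by the
Lagrange-type identity `2 (S ∑_i p_i g_i g_iᵀ - m mᵀ) = ∑_{i,j} p_i p_j (g_i - g_j)(g_i - g_j)ᵀ`,
whose summands are nonnegative multiples of rank-one Gram matrices.
-/

open Matrix

section

variable {ι n R : Type*} [Fintype ι]

theorem two_smul_sum_smul_sum_vecMulVec_sub [CommRing R] (p : ι → R) (g : ι → n → R) :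
    (2 : R) • ((∑ i, p i) • ∑ i, p i • vecMulVec (g i) (g i)
        - vecMulVec (∑ i, p i • g i) (∑ i, p i • g i)) =
      ∑ i, ∑ j, (p i * p j) • vecMulVec (g i - g j) (g i - g j) := by
  ext k l
  simp only [Matrix.smul_apply, Matrix.sub_apply, Finset.sum_apply, vecMulVec_apply, Pi.sub_apply,
    Pi.smul_apply, smul_eq_mul, Matrix.sum_apply, Finset.sum_mul, Finset.mul_sum,
    mul_sub, sub_mul, Finset.sum_sub_distrib]
  rw [Finset.sum_comm (f := fun i j => p i * p j * (g j k * g j l)),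
    Finset.sum_comm (f := fun i j => p i * p j * (g i k * g j l))]
  simp only [← Finset.sum_sub_distrib]
  exact Finset.sum_congr rfl fun i _ => Finset.sum_congr rfl fun j _ => by ring

variable [Finite n]

theorem posSemidef_sum_smul_vecMulVec_self {α : Type*} (s : Finset α) {c : α → ℝ}
    (hc : ∀ i ∈ s, 0 ≤ c i) (v : α → n → ℝ) :
    (∑ i ∈ s, c i • vecMulVec (v i) (v i)).PosSemidef :=
  posSemidef_sum s fun i hi => (posSemidef_vecMulVec_self_star (v i)).smul (hc i hi)

theorem posSemidef_sum_smul_sum_vecMulVec_sub {p : ι → ℝ} (hp : ∀ i, 0 ≤ p i) (g : ι → n → ℝ) :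
    ((∑ i, p i) • ∑ i, p i • vecMulVec (g i) (g i)
        - vecMulVec (∑ i, p i • g i) (∑ i, p i • g i)).PosSemidef := by
  have h2 := two_smul_sum_smul_sum_vecMulVec_sub p g ▸ posSemidef_sum Finset.univ fun i _ =>
    posSemidef_sum_smul_vecMulVec_self Finset.univ (fun j _ => mul_nonneg (hp i) (hp j))
      fun j => g i - g j
  simpa only [inv_smul_smul₀ (two_ne_zero (α := ℝ))] using
    h2.smul (inv_nonneg.2 (zero_le_two (α := ℝ)))

end

theorem mnl_hessian_lower_bound_general
    (K n : ℕ) (p : Fin K → ℝ) (hp : ∀ i, 0 ≤ p i)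
    (g : Fin K → (Fin n → ℝ))
    (κ : ℝ) (hκ : ∀ i, κ ≤ p i * (1 - ∑ j, p j)) :
    ((∑ i, p i • Matrix.vecMulVec (g i) (g i))
      - Matrix.vecMulVec (∑ i, p i • g i) (∑ i, p i • g i)
      - κ • ∑ i, Matrix.vecMulVec (g i) (g i)).PosSemidef := by
  have hsplit : (∑ i, p i • vecMulVec (g i) (g i))
      - vecMulVec (∑ i, p i • g i) (∑ i, p i • g i) - κ • ∑ i, vecMulVec (g i) (g i) =
      ∑ i, (p i * (1 - ∑ j, p j) - κ) • vecMulVec (g i) (g i) +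
        ((∑ j, p j) • ∑ i, p i • vecMulVec (g i) (g i)
          - vecMulVec (∑ i, p i • g i) (∑ i, p i • g i)) := by
    simp only [mul_comm (p _), mul_smul, sub_smul, one_smul, Finset.sum_sub_distrib,
      Finset.smul_sum]
    abel
  rw [hsplit]
  exact (posSemidef_sum_smul_vecMulVec_self _ (fun i _ => sub_nonneg.2 (hκ i)) g).add
    (posSemidef_sum_smul_sum_vecMulVec_sub hp g)

/-- Hessian-type lower bound for the multinomial-logit negative log-likelihood:
for nonnegative weights `p` with `∑ p_i ≤ 1`, vectors `g_1, …, g_K ∈ ℝ^n`, and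
`0 ≤ κ ≤ p_i (1 − ∑_j p_j)` for all `i`,
`∑_i p_i g_i g_iᵀ − (∑_i p_i g_i)(∑_i p_i g_i)ᵀ ⪰ κ ∑_i g_i g_iᵀ`
in the Loewner order. -/
theorem mnl_hessian_lower_bound
    (K n : ℕ) (hK : 1 ≤ K) (p : Fin K → ℝ) (hp : ∀ i, 0 ≤ p i)
    (hq : ∑ i, p i ≤ 1) (g : Fin K → (Fin n → ℝ))
    (κ : ℝ) (hκ0 : 0 ≤ κ) (hκ : ∀ i, κ ≤ p i * (1 - ∑ j, p j)) :
    ((∑ i, p i • Matrix.vecMulVec (g i) (g i))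
      - Matrix.vecMulVec (∑ i, p i • g i) (∑ i, p i • g i)
      - κ • ∑ i, Matrix.vecMulVec (g i) (g i)).PosSemidef :=
  mnl_hessian_lower_bound_general K n p hp g κ hκ
end

section
/- Let λ > 0 and d ≥ 1, and for s = 1, …, n let G_s be a real d × k_s matrix (the k_s may differ across s). Set V := λ I_d + ∑_{s=1}^n G_s G_sᵀ. Then ∑_{s=1}^n λ_max(G_sᵀ V^{-1} G_s) ≤ d, where λ_max(M) denotes the largest eigenvalue of the symmetric positive semidefinite matrix M. -/
/-!
The largest eigenvalue of a positive semidefinite matrix is at most its trace, so the sum is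
bounded by `∑ₛ tr (G_sᵀ V⁻¹ G_s) = tr (V⁻¹ ∑ₛ G_s G_sᵀ) = tr (V⁻¹ (V - λ I)) = d - λ tr V⁻¹ ≤ d`.
-/

open Matrix

/-- The largest eigenvalue of a symmetric positive semidefinite real matrix,
expressed as the supremum of its Rayleigh quotient over the Euclidean unit
sphere. -/
noncomputable def lambdaMax {k : ℕ} (M : Matrix (Fin k) (Fin k) ℝ) : ℝ :=
  sSup {r : ℝ | ∃ x : Fin k → ℝ, (∑ i, (x i) ^ 2) = 1 ∧ r = x ⬝ᵥ M.mulVec x}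

namespace Matrix

variable {ι m : Type*} [Fintype ι] [Fintype m]

-- Cauchy–Schwarz for each row `B i` against `x`, summed over the rows.
theorem dotProduct_mulVec_transpose_mul_self_le (B : Matrix m ι ℝ) (x : ι → ℝ) :
    x ⬝ᵥ (Bᵀ * B) *ᵥ x ≤ (Bᵀ * B).trace * (x ⬝ᵥ x) := by
  have hquad : x ⬝ᵥ (Bᵀ * B) *ᵥ x = ∑ i, (B i ⬝ᵥ x) ^ 2 := by
    rw [← mulVec_mulVec, dotProduct_mulVec, vecMul_transpose]
    simp only [dotProduct, mulVec, sq]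
  have htrace : (Bᵀ * B).trace = ∑ i, B i ⬝ᵥ B i := by
    rw [trace_mul_comm, trace]
    simp only [diag, mul_apply, transpose_apply, dotProduct]
  rw [hquad, htrace, Finset.sum_mul]
  refine Finset.sum_le_sum fun i _ => ?_
  simpa only [dotProduct, sq] using Finset.sum_mul_sq_le_sq_mul_sq Finset.univ (B i) x

open scoped MatrixOrder in
theorem PosSemidef.exists_eq_transpose_mul_self {M : Matrix ι ι ℝ} (hM : M.PosSemidef) :
    ∃ B : Matrix ι ι ℝ, M = Bᵀ * B := by
  classical
  obtain ⟨B, hB⟩ := CStarAlgebra.nonneg_iff_eq_star_mul_self.mp hM.nonneg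
  exact ⟨B, hB⟩

theorem PosSemidef.dotProduct_mulVec_le_trace_mul {M : Matrix ι ι ℝ} (hM : M.PosSemidef)
    (x : ι → ℝ) : x ⬝ᵥ M *ᵥ x ≤ M.trace * (x ⬝ᵥ x) := by
  obtain ⟨B, rfl⟩ := hM.exists_eq_transpose_mul_self
  exact dotProduct_mulVec_transpose_mul_self_le B x

end Matrix

theorem lambdaMax_le_trace {k : ℕ} {M : Matrix (Fin k) (Fin k) ℝ} (hM : M.PosSemidef) :
    lambdaMax M ≤ M.trace := by
  -- `Real.sSup_le` also covers `k = 0`, where the set is empty and `sSup ∅ = 0`.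
  refine Real.sSup_le ?_ hM.trace_nonneg
  rintro r ⟨x, hx, rfl⟩
  simpa only [dotProduct, ← sq, hx, mul_one] using hM.dotProduct_mulVec_le_trace_mul x

section

variable {n σ : Type*} [Fintype n] [Fintype σ] {κ : σ → Type*}
  [∀ s, Fintype (κ s)]

theorem posDef_smul_one_add_sum_mul_transpose [DecidableEq n] {lam : ℝ} (hlam : 0 < lam)
    (G : ∀ s, Matrix n (κ s) ℝ) : (lam • (1 : Matrix n n ℝ) + ∑ s, G s * (G s)ᵀ).PosDef := by
  refine (PosDef.one.smul hlam).add_posSemidef (posSemidef_sum _ fun s _ => ?_)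
  simpa only [conjTranspose_eq_transpose_of_trivial] using posSemidef_self_mul_conjTranspose (G s)

theorem sum_trace_transpose_mul_mul (W : Matrix n n ℝ) (G : ∀ s, Matrix n (κ s) ℝ) :
    ∑ s, ((G s)ᵀ * W * G s).trace = (W * ∑ s, G s * (G s)ᵀ).trace := by
  rw [Finset.mul_sum, trace_sum]
  refine Finset.sum_congr rfl fun s _ => ?_
  rw [trace_mul_comm, ← Matrix.mul_assoc, trace_mul_comm]

end

theorem sum_lambdaMax_le_dim_general
    (d n : ℕ) (lam : ℝ) (hlam : 0 < lam)
    (k : Fin n → ℕ) (G : ∀ s : Fin n, Matrix (Fin d) (Fin (k s)) ℝ)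
    (V : Matrix (Fin d) (Fin d) ℝ)
    (hV : V = lam • (1 : Matrix (Fin d) (Fin d) ℝ) + ∑ s, G s * (G s)ᵀ) :
    ∑ s, lambdaMax ((G s)ᵀ * V⁻¹ * G s) ≤ (d : ℝ) := by
  have hV_pos : V.PosDef := hV ▸ posDef_smul_one_add_sum_mul_transpose hlam G
  have hVinv_psd : V⁻¹.PosSemidef := hV_pos.inv.posSemidef
  have hsum : ∑ s, G s * (G s)ᵀ = V - lam • 1 := by rw [hV]; abel
  calc ∑ s, lambdaMax ((G s)ᵀ * V⁻¹ * G s)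
      ≤ ∑ s, ((G s)ᵀ * V⁻¹ * G s).trace := Finset.sum_le_sum fun s _ => lambdaMax_le_trace <| by
        simpa only [conjTranspose_eq_transpose_of_trivial] using
          hVinv_psd.conjTranspose_mul_mul_same (G s)
    _ = (V⁻¹ * (V - lam • 1)).trace := by rw [sum_trace_transpose_mul_mul, hsum]
    _ = d - lam * V⁻¹.trace := by
        rw [Matrix.mul_sub, nonsing_inv_mul V ((isUnit_iff_isUnit_det V).mp hV_pos.isUnit),
          Matrix.mul_smul, Matrix.mul_one, trace_sub, trace_smul, trace_one, Fintype.card_fin,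
          smul_eq_mul]
    _ ≤ d := sub_le_self _ (mul_nonneg hlam.le hVinv_psd.trace_nonneg)

/-- For `λ > 0`, matrices `G_s ∈ ℝ^{d × k_s}` and
`V := λ I_d + ∑_s G_s G_sᵀ`, the largest eigenvalues of the matrices
`G_sᵀ V⁻¹ G_s` sum to at most `d`. -/
theorem sum_lambdaMax_le_dim
    (d n : ℕ) (hd : 1 ≤ d) (lam : ℝ) (hlam : 0 < lam)
    (k : Fin n → ℕ) (G : ∀ s : Fin n, Matrix (Fin d) (Fin (k s)) ℝ)
    (V : Matrix (Fin d) (Fin d) ℝ)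
    (hV : V = lam • (1 : Matrix (Fin d) (Fin d) ℝ) + ∑ s, G s * (G s)ᵀ) :
    ∑ s, lambdaMax ((G s)ᵀ * V⁻¹ * G s) ≤ (d : ℝ) :=
  sum_lambdaMax_le_dim_general d n lam hlam k G V hV
end

section
/- Generalized elliptical potential lemma: Let λ > 0, C_g > 0, K ≥ 1, d ≥ 1 and t ≥ 1. For each s ∈ {1,…,t} let S_s be a nonempty finite index set with |S_s| ≤ K, and for each i ∈ S_s let x_{s,i} ∈ ℝ^d satisfy ‖x_{s,i}‖₂ ≤ C_g. Define V_s := λ I_d + ∑_{τ=1}^{s−1} ∑_{i ∈ S_τ} x_{τ,i} x_{τ,i}ᵀ for s = 1,…,t. Then ∑_{s=1}^{t} min{ 1, max_{i ∈ S_s} ‖x_{s,i}‖²_{V_s^{-1}} } ≤ 2 d · log(1 + t K C_g² / (d λ)). -/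
/-!
Write `m_s` for the maximal potential of round `s` and
`G_r = λ I + ∑_{τ < r} ∑_{i ∈ S_τ} x_{τ,i} x_{τ,i}ᵀ`. By the matrix determinant lemma, adding the
maximizing rank-one term to `G_s` multiplies the determinant by `1 + m_s`, and the remaining
rank-one terms can only increase it, so `det G_s · (1 + m_s) ≤ det G_{s+1}`. Telescoping gives
`λ^d ∏_s (1 + m_s) ≤ det G_t`, and AM–GM on the eigenvalues gives
`det G_t ≤ (tr G_t / d)^d ≤ (λ + t K C_g² / d)^d`. Taking logarithms and using
`min 1 u ≤ 2 log (1 + u)` finishes the proof.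
-/

open Matrix Finset

lemma le_two_mul_log_one_add {v : ℝ} (hv₀ : 0 ≤ v) (hv₁ : v ≤ 1) :
    v ≤ 2 * Real.log (1 + v) := by
  have h := Real.one_sub_inv_le_log_of_pos (by linarith : 0 < 1 + v)
  have h' : v / 2 ≤ 1 - (1 + v)⁻¹ := by
    field_simp
    nlinarith
  linarith

lemma min_one_le_two_mul_log_one_add {u : ℝ} (hu : 0 ≤ u) :
    min 1 u ≤ 2 * Real.log (1 + u) := by
  have hv : 0 ≤ min 1 u := le_min zero_le_one hu
  calc min 1 u ≤ 2 * Real.log (1 + min 1 u) := le_two_mul_log_one_add hv (min_le_left _ _)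
    _ ≤ 2 * Real.log (1 + u) := by gcongr; exact min_le_right _ _

lemma mul_prod_le_of_mul_le_succ {R : Type*} [CommSemiring R] [PartialOrder R] [IsOrderedRing R]
    {t : ℕ} {f : ℕ → R} {g : Fin t → R} (hg : ∀ s, 0 ≤ g s)
    (h : ∀ s : Fin t, f s * g s ≤ f (s + 1)) :
    f 0 * ∏ s, g s ≤ f t := by
  induction t with
  | zero => simp
  | succ t ih =>
    rw [Fin.prod_univ_castSucc, ← mul_assoc]
    calc f 0 * (∏ s : Fin t, g s.castSucc) * g (Fin.last t)
        ≤ f t * g (Fin.last t) :=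
          mul_le_mul_of_nonneg_right (ih (fun s => hg _) (fun s => h s.castSucc)) (hg _)
      _ ≤ f (t + 1) := h (Fin.last t)

lemma Real.prod_le_sum_div_card_pow {ι : Type*} (s : Finset ι) {z : ι → ℝ}
    (hz : ∀ i ∈ s, 0 ≤ z i) :
    ∏ i ∈ s, z i ≤ ((∑ i ∈ s, z i) / #s) ^ #s := by
  rcases s.eq_empty_or_nonempty with rfl | hs
  · simp
  have hcard : (0 : ℝ) < #s := by exact_mod_cast hs.card_pos
  have amgm := Real.geom_mean_le_arith_mean_weighted s (fun _ => (#s : ℝ)⁻¹) z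
    (fun _ _ => by positivity) (by simp [hcard.ne']) hz
  rw [← mul_sum, inv_mul_eq_div] at amgm
  calc ∏ i ∈ s, z i = (∏ i ∈ s, z i ^ (#s : ℝ)⁻¹) ^ #s := by
        rw [← prod_pow]
        refine prod_congr rfl fun i hi => ?_
        rw [← Real.rpow_natCast, ← Real.rpow_mul (hz i hi), inv_mul_cancel₀ hcard.ne',
          Real.rpow_one]
    _ ≤ ((∑ i ∈ s, z i) / #s) ^ #s := by
        gcongr
        exact prod_nonneg fun i hi => Real.rpow_nonneg (hz i hi) _

namespace Matrix

variable {n : Type*} [Fintype n]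

theorem posSemidef_vecMulVec_self (y : n → ℝ) : (vecMulVec y y).PosSemidef := by
  simpa using posSemidef_vecMulVec_self_star y

theorem posSemidef_sum_vecMulVec_self {ι : Type*} (s : Finset ι) (y : ι → n → ℝ) :
    (∑ i ∈ s, vecMulVec (y i) (y i)).PosSemidef :=
  posSemidef_sum s fun i _ => posSemidef_vecMulVec_self (y i)

variable [DecidableEq n]

theorem det_add_vecMulVec {R : Type*} [CommRing R] {A : Matrix n n R} (hA : IsUnit A.det)
    (u v : n → R) : (A + vecMulVec u v).det = A.det * (1 + v ⬝ᵥ A⁻¹ *ᵥ u) := by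
  rw [vecMulVec_eq Unit, det_add_replicateCol_mul_replicateRow hA, Matrix.mul_assoc,
    ← replicateCol_mulVec, det_unique (n := Unit), add_apply, one_apply_eq,
    replicateRow_mul_replicateCol_apply]

namespace PosDef

variable {A : Matrix n n ℝ}

theorem dotProduct_inv_mulVec_nonneg (hA : A.PosDef) (y : n → ℝ) : 0 ≤ y ⬝ᵥ A⁻¹ *ᵥ y := by
  simpa only [star_trivial] using hA.inv.posSemidef.dotProduct_mulVec_nonneg y

theorem sup'_dotProduct_inv_mulVec_nonneg {ι : Type*} (hA : A.PosDef) {s : Finset ι}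
    (hs : s.Nonempty) (y : ι → n → ℝ) : 0 ≤ s.sup' hs fun i => y i ⬝ᵥ A⁻¹ *ᵥ y i :=
  le_sup'_of_le _ hs.choose_spec (hA.dotProduct_inv_mulVec_nonneg _)

theorem det_le_det_add_vecMulVec (hA : A.PosDef) (y : n → ℝ) :
    A.det ≤ (A + vecMulVec y y).det := by
  rw [det_add_vecMulVec hA.det_pos.ne'.isUnit]
  exact le_mul_of_one_le_right hA.det_pos.le
    (le_add_of_nonneg_right (hA.dotProduct_inv_mulVec_nonneg y))

theorem det_le_det_add_sum_vecMulVec {ι : Type*} (hA : A.PosDef) (s : Finset ι)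
    (y : ι → n → ℝ) :
    A.det ≤ (A + ∑ i ∈ s, vecMulVec (y i) (y i)).det := by
  classical
  induction s using Finset.induction_on with
  | empty => simp
  | insert j s hj ih =>
    rw [sum_insert hj, add_comm (vecMulVec _ _), ← add_assoc]
    exact ih.trans
      ((hA.add_posSemidef (posSemidef_sum_vecMulVec_self s y)).det_le_det_add_vecMulVec _)

theorem det_mul_one_add_sup'_le {ι : Type*} (hA : A.PosDef) {s : Finset ι} (hs : s.Nonempty)
    (y : ι → n → ℝ) :
    A.det * (1 + s.sup' hs fun i => y i ⬝ᵥ A⁻¹ *ᵥ y i)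
      ≤ (A + ∑ i ∈ s, vecMulVec (y i) (y i)).det := by
  classical
  obtain ⟨i, hi, hsup⟩ := exists_mem_eq_sup' hs fun i => y i ⬝ᵥ A⁻¹ *ᵥ y i
  rw [hsup, ← det_add_vecMulVec hA.det_pos.ne'.isUnit, ← add_sum_erase s _ hi, ← add_assoc]
  exact (hA.add_posSemidef (posSemidef_vecMulVec_self _)).det_le_det_add_sum_vecMulVec _ y

end PosDef

theorem PosSemidef.det_le_trace_div_card_pow {A : Matrix n n ℝ} (hA : A.PosSemidef) :
    A.det ≤ (A.trace / Fintype.card n) ^ Fintype.card n := by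
  rw [hA.isHermitian.det_eq_prod_eigenvalues, hA.isHermitian.trace_eq_sum_eigenvalues]
  simpa using Real.prod_le_sum_div_card_pow univ fun i _ => hA.eigenvalues_nonneg i

end Matrix

section Gram

variable {ι n : Type*} [DecidableEq n] {t : ℕ}
  (lam : ℝ) (S : Fin t → Finset ι) (x : Fin t → ι → n → ℝ)

/-- Indexed by `ℕ` rather than `Fin t` so that `gramAfter lam S x t`, one step past the last
round, makes sense. -/
def gramAfter (r : ℕ) : Matrix n n ℝ :=
  lam • 1 + ∑ τ ∈ univ.filter (fun τ : Fin t => (τ : ℕ) < r),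
    ∑ i ∈ S τ, vecMulVec (x τ i) (x τ i)

theorem gramAfter_zero : gramAfter lam S x 0 = lam • 1 := by
  simp [gramAfter]

theorem gramAfter_succ (s : Fin t) :
    gramAfter lam S x (s + 1) = gramAfter lam S x s + ∑ i ∈ S s, vecMulVec (x s i) (x s i) := by
  have hfilter : univ.filter (fun τ : Fin t => (τ : ℕ) < s + 1)
      = insert s (univ.filter fun τ : Fin t => (τ : ℕ) < s) := by
    ext τ
    simp only [mem_filter, mem_univ, true_and, mem_insert, Fin.ext_iff]
    omega
  rw [gramAfter, gramAfter, hfilter, sum_insert (by simp)]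
  abel

variable {lam} [Fintype n]

theorem posDef_gramAfter (hlam : 0 < lam) (r : ℕ) : (gramAfter lam S x r).PosDef :=
  (PosDef.one.smul hlam).add_posSemidef
    (posSemidef_sum _ fun τ _ => posSemidef_sum_vecMulVec_self (S τ) (x τ))

theorem trace_gramAfter_le {K : ℕ} {C : ℝ} (hC : 0 ≤ C) (hSK : ∀ s, #(S s) ≤ K)
    (hx : ∀ s, ∀ i ∈ S s, x s i ⬝ᵥ x s i ≤ C) (r : ℕ) :
    (gramAfter lam S x r).trace ≤ Fintype.card n * lam + t * K * C := by
  have hround (τ : Fin t) : (∑ i ∈ S τ, vecMulVec (x τ i) (x τ i)).trace ≤ K * C := by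
    simp_rw [trace_sum, trace_vecMulVec]
    calc ∑ i ∈ S τ, x τ i ⬝ᵥ x τ i ≤ #(S τ) • C := sum_le_card_nsmul _ _ _ (hx τ)
      _ ≤ K * C := by rw [nsmul_eq_mul]; gcongr; exact_mod_cast hSK τ
  have hrounds : ∑ τ ∈ univ.filter (fun τ : Fin t => (τ : ℕ) < r),
      (∑ i ∈ S τ, vecMulVec (x τ i) (x τ i)).trace ≤ t * (K * C) :=
    calc _ ≤ ∑ τ ∈ univ.filter (fun τ : Fin t => (τ : ℕ) < r), (K * C : ℝ) :=
          sum_le_sum fun τ _ => hround τ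
      _ ≤ t * (K * C) := by
        rw [sum_const, nsmul_eq_mul]
        gcongr
        simpa using card_filter_le univ fun τ : Fin t => (τ : ℕ) < r
  rw [gramAfter, trace_add, trace_smul, trace_one, trace_sum, smul_eq_mul, mul_comm]
  linarith

theorem pow_mul_prod_le_det_gramAfter (hlam : 0 < lam) (hS : ∀ s, (S s).Nonempty) :
    lam ^ Fintype.card n * ∏ s, (1 + (S s).sup' (hS s)
        fun i => x s i ⬝ᵥ (gramAfter lam S x s)⁻¹ *ᵥ x s i)
      ≤ (gramAfter lam S x t).det := by
  have h0 : lam ^ Fintype.card n = (gramAfter lam S x 0).det := by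
    rw [gramAfter_zero, det_smul, det_one, mul_one]
  rw [h0]
  refine mul_prod_le_of_mul_le_succ (f := fun r => (gramAfter lam S x r).det)
    (fun s => ?_) fun s => ?_
  · linarith [(posDef_gramAfter S x hlam s).sup'_dotProduct_inv_mulVec_nonneg (hS s) (x s)]
  · rw [gramAfter_succ]
    exact (posDef_gramAfter S x hlam s).det_mul_one_add_sup'_le (hS s) (x s)

theorem prod_one_add_sup'_le [Nonempty n] (hlam : 0 < lam) (hS : ∀ s, (S s).Nonempty) {K : ℕ}
    {C : ℝ} (hC : 0 ≤ C) (hSK : ∀ s, #(S s) ≤ K) (hx : ∀ s, ∀ i ∈ S s, x s i ⬝ᵥ x s i ≤ C) :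
    ∏ s, (1 + (S s).sup' (hS s) fun i => x s i ⬝ᵥ (gramAfter lam S x s)⁻¹ *ᵥ x s i)
      ≤ (1 + t * K * C / (Fintype.card n * lam)) ^ Fintype.card n := by
  have hN : (0 : ℝ) < Fintype.card n := by exact_mod_cast Fintype.card_pos
  have hG := posDef_gramAfter S x hlam t
  have htrace : (gramAfter lam S x t).trace / Fintype.card n
      ≤ lam * (1 + t * K * C / (Fintype.card n * lam)) := by
    have := trace_gramAfter_le (lam := lam) S x hC hSK hx t
    rw [div_le_iff₀ hN]
    field_simp
    linarith
  refine le_of_mul_le_mul_left ?_ (pow_pos hlam (Fintype.card n))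
  calc _ ≤ (gramAfter lam S x t).det := pow_mul_prod_le_det_gramAfter S x hlam hS
    _ ≤ ((gramAfter lam S x t).trace / Fintype.card n) ^ Fintype.card n :=
        hG.posSemidef.det_le_trace_div_card_pow
    _ ≤ (lam * (1 + t * K * C / (Fintype.card n * lam))) ^ Fintype.card n :=
        pow_le_pow_left₀ (div_nonneg hG.posSemidef.trace_nonneg hN.le) htrace _
    _ = _ := mul_pow _ _ _

end Gram

theorem generalized_elliptical_potential_general
    (d K t : ℕ) (hd : 1 ≤ d)
    (lam Cg : ℝ) (hlam : 0 < lam)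
    (ι : Type*) (S : Fin t → Finset ι)
    (hS : ∀ s, (S s).Nonempty) (hSK : ∀ s, (S s).card ≤ K)
    (x : Fin t → ι → (Fin d → ℝ))
    (hx : ∀ s, ∀ i ∈ S s, Real.sqrt (∑ j, (x s i j) ^ 2) ≤ Cg)
    (V : Fin t → Matrix (Fin d) (Fin d) ℝ)
    (hV : ∀ s : Fin t, V s = lam • (1 : Matrix (Fin d) (Fin d) ℝ)
      + ∑ τ ∈ Finset.univ.filter (fun τ : Fin t => τ < s),
          ∑ i ∈ S τ, Matrix.vecMulVec (x τ i) (x τ i)) :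
    ∑ s, min 1 ((S s).sup' (hS s) (fun i => x s i ⬝ᵥ (V s)⁻¹.mulVec (x s i)))
      ≤ 2 * (d : ℝ) * Real.log (1 + (t : ℝ) * (K : ℝ) * Cg ^ 2 / ((d : ℝ) * lam)) := by
  have : Nonempty (Fin d) := ⟨⟨0, hd⟩⟩
  have hVG (s : Fin t) : V s = gramAfter lam S x s := hV s
  have hx' (s : Fin t) (i : ι) (hi : i ∈ S s) : x s i ⬝ᵥ x s i ≤ Cg ^ 2 := by
    simpa only [dotProduct, sq] using (Real.sqrt_le_iff.mp (hx s i hi)).2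
  have hbound := prod_one_add_sup'_le S x hlam hS (sq_nonneg Cg) hSK hx'
  rw [Fintype.card_fin] at hbound
  simp only [hVG]
  set m : Fin t → ℝ := fun s =>
    (S s).sup' (hS s) fun i => x s i ⬝ᵥ (gramAfter lam S x s)⁻¹ *ᵥ x s i
  have hm (s : Fin t) : 0 ≤ m s :=
    (posDef_gramAfter S x hlam s).sup'_dotProduct_inv_mulVec_nonneg (hS s) (x s)
  calc ∑ s, min 1 (m s) ≤ ∑ s, 2 * Real.log (1 + m s) :=
        sum_le_sum fun s _ => min_one_le_two_mul_log_one_add (hm s)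
    _ = 2 * Real.log (∏ s, (1 + m s)) := by
        rw [Real.log_prod fun s _ => by linarith [hm s], mul_sum]
    _ ≤ 2 * Real.log ((1 + t * K * Cg ^ 2 / (d * lam)) ^ d) := by
        gcongr
        exact prod_pos fun s _ => by linarith [hm s]
    _ = _ := by rw [Real.log_pow]; ring

/-- **Generalized elliptical potential lemma.**
For `λ > 0`, `C_g > 0`, nonempty index sets `S_s` of size at most `K`,
vectors `x_{s,i}` with `‖x_{s,i}‖₂ ≤ C_g`, and Gram matrices
`V_s := λ I_d + ∑_{τ < s} ∑_{i ∈ S_τ} x_{τ,i} x_{τ,i}ᵀ`, one has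
`∑_{s=1}^t min{1, max_{i ∈ S_s} ‖x_{s,i}‖²_{V_s⁻¹}} ≤ 2 d log(1 + t K C_g² / (d λ))`. -/
theorem generalized_elliptical_potential
    (d K t : ℕ) (hd : 1 ≤ d) (hK : 1 ≤ K) (ht : 1 ≤ t)
    (lam Cg : ℝ) (hlam : 0 < lam) (hCg : 0 < Cg)
    (ι : Type*) (S : Fin t → Finset ι)
    (hS : ∀ s, (S s).Nonempty) (hSK : ∀ s, (S s).card ≤ K)
    (x : Fin t → ι → (Fin d → ℝ))
    (hx : ∀ s, ∀ i ∈ S s, Real.sqrt (∑ j, (x s i j) ^ 2) ≤ Cg)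
    (V : Fin t → Matrix (Fin d) (Fin d) ℝ)
    (hV : ∀ s : Fin t, V s = lam • (1 : Matrix (Fin d) (Fin d) ℝ)
      + ∑ τ ∈ Finset.univ.filter (fun τ : Fin t => τ < s),
          ∑ i ∈ S τ, Matrix.vecMulVec (x τ i) (x τ i)) :
    ∑ s, min 1 ((S s).sup' (hS s) (fun i => x s i ⬝ᵥ (V s)⁻¹.mulVec (x s i)))
      ≤ 2 * (d : ℝ) * Real.log (1 + (t : ℝ) * (K : ℝ) * Cg ^ 2 / ((d : ℝ) * lam)) :=
  generalized_elliptical_potential_general d K t hd lam Cg hlam ι S hS hSK x hx V hV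
end

section
/- Determinant growth under rank-one updates: Let V ∈ ℝ^{d×d} be symmetric positive definite and let x_1, …, x_m ∈ ℝ^d. Then det(V + ∑_{i=1}^m x_i x_iᵀ) ≥ det(V) · (1 + ∑_{i=1}^m x_iᵀ V^{-1} x_i). In particular, det(V + ∑_{i=1}^m x_i x_iᵀ) ≥ det(V) · (1 + max_{1 ≤ i ≤ m} x_iᵀ V^{-1} x_i) whenever m ≥ 1. -/
/-!
Put the vectors `x i` as the rows of a matrix `X`, so that `∑ i, x i x iᵀ = Xᵀ X`. The matrix
determinant lemma gives `det (V + Xᵀ X) = det V * det (1 + G)` for the Gram matrix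
`G = X V⁻¹ Xᵀ`, which is positive semidefinite with diagonal entries `x iᵀ V⁻¹ x i`.
Diagonalising `G` with eigenvalues `λ j ≥ 0`,
`det (1 + G) = ∏ j, (1 + λ j) ≥ 1 + ∑ j, λ j = 1 + trace G`.
The bound with the maximum follows since every summand `x iᵀ V⁻¹ x i` is nonnegative.
-/

open Matrix

theorem Finset.one_add_sum_le_prod_one_add {ι R : Type*} [CommSemiring R] [PartialOrder R]
    [IsOrderedRing R] (s : Finset ι) {f : ι → R} (hf : ∀ i ∈ s, 0 ≤ f i) :
    1 + ∑ i ∈ s, f i ≤ ∏ i ∈ s, (1 + f i) := by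
  classical
  induction s using Finset.induction_on with
  | empty => simp
  | insert a s ha ih =>
    have hfa : 0 ≤ f a := hf a (mem_insert_self a s)
    have hs : 0 ≤ ∑ i ∈ s, f i := sum_nonneg fun i hi => hf i (mem_insert_of_mem hi)
    rw [sum_insert ha, prod_insert ha]
    calc 1 + (f a + ∑ i ∈ s, f i) ≤ 1 + (f a + ∑ i ∈ s, f i) + f a * ∑ i ∈ s, f i :=
          le_add_of_nonneg_right (mul_nonneg hfa hs)
      _ = (1 + f a) * (1 + ∑ i ∈ s, f i) := by ring
      _ ≤ (1 + f a) * ∏ i ∈ s, (1 + f i) :=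
          mul_le_mul_of_nonneg_left (ih fun i hi => hf i (mem_insert_of_mem hi))
            (add_nonneg zero_le_one hfa)

namespace Matrix

variable {m n ι 𝕜 R : Type*}

theorem IsHermitian.det_one_add [Fintype n] [DecidableEq n] [RCLike 𝕜] {A : Matrix n n 𝕜}
    (hA : A.IsHermitian) : (1 + A).det = ∏ i, (1 + (hA.eigenvalues i : 𝕜)) := by
  set U := hA.eigenvectorUnitary
  have hdiag : Unitary.conjStarAlgAut 𝕜 _ (star U) (1 + A) =
      diagonal fun i => 1 + (hA.eigenvalues i : 𝕜) := by
    rw [map_add, map_one, hA.conjStarAlgAut_star_eigenvectorUnitary, ← diagonal_one,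
      diagonal_add]
    rfl
  rw [← det_diagonal, ← hdiag, Unitary.conjStarAlgAut_star_apply,
    det_conj_of_mul_eq_one (Unitary.coe_star_mul_self U) (Unitary.coe_mul_star_self U)]

theorem PosSemidef.one_add_trace_le_det_one_add [Fintype n] [DecidableEq n]
    {A : Matrix n n ℝ} (hA : A.PosSemidef) : 1 + A.trace ≤ (1 + A).det := by
  rw [hA.isHermitian.det_one_add, hA.isHermitian.trace_eq_sum_eigenvalues]
  simpa using Finset.univ.one_add_sum_le_prod_one_add fun i _ => hA.eigenvalues_nonneg i

theorem sum_vecMulVec_eq_transpose_mul [Fintype ι] [CommSemiring R] (x y : ι → n → R) :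
    ∑ i, vecMulVec (x i) (y i) = (of x)ᵀ * of y := by
  ext j k
  simp [mul_apply, vecMulVec_apply, Matrix.sum_apply]

theorem of_mul_mul_transpose_of_apply [Fintype m] [Fintype n] [CommSemiring R]
    (x : ι → m → R) (M : Matrix m n R) (y : ι → n → R) (i j : ι) :
    (of x * M * (of y)ᵀ) i j = x i ⬝ᵥ M *ᵥ y j := by
  simp only [mul_apply, of_apply, transpose_apply, dotProduct, mulVec, Finset.sum_mul,
    Finset.mul_sum, mul_assoc]
  exact Finset.sum_comm

theorem PosDef.det_mul_one_add_sum_le_det_add_sum_vecMulVec [Fintype n] [DecidableEq n]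
    [Fintype ι] [DecidableEq ι] {V : Matrix n n ℝ} (hV : V.PosDef) (x : ι → n → ℝ) :
    V.det * (1 + ∑ i, x i ⬝ᵥ V⁻¹ *ᵥ x i) ≤ (V + ∑ i, vecMulVec (x i) (x i)).det := by
  have hgram : (of x * V⁻¹ * (of x)ᵀ).PosSemidef := by
    simpa using hV.inv.posSemidef.mul_mul_conjTranspose_same (of x)
  have htrace : (of x * V⁻¹ * (of x)ᵀ).trace = ∑ i, x i ⬝ᵥ V⁻¹ *ᵥ x i :=
    Finset.sum_congr rfl fun i _ => of_mul_mul_transpose_of_apply x V⁻¹ x i i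
  rw [sum_vecMulVec_eq_transpose_mul, det_add_mul _ _ hV.det_pos.ne'.isUnit, ← htrace]
  exact mul_le_mul_of_nonneg_left hgram.one_add_trace_le_det_one_add hV.det_pos.le

end Matrix

/-- **Determinant growth under rank-one updates.**
For a symmetric positive definite `V` and vectors `x_1, …, x_m`,
`det(V + ∑_i x_i x_iᵀ) ≥ det(V) (1 + ∑_i x_iᵀ V⁻¹ x_i)`; in particular,
`det(V + ∑_i x_i x_iᵀ) ≥ det(V) (1 + max_i x_iᵀ V⁻¹ x_i)` whenever `m ≥ 1`. -/
theorem det_rank_one_updates_ge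
    (d m : ℕ) (V : Matrix (Fin d) (Fin d) ℝ) (hV : V.PosDef)
    (x : Fin m → (Fin d → ℝ)) :
    (V.det * (1 + ∑ i, x i ⬝ᵥ V⁻¹.mulVec (x i))
      ≤ (V + ∑ i, Matrix.vecMulVec (x i) (x i)).det) ∧
    (∀ hm : 1 ≤ m,
      V.det * (1 + (Finset.univ : Finset (Fin m)).sup'
          ⟨⟨0, hm⟩, Finset.mem_univ _⟩ (fun i => x i ⬝ᵥ V⁻¹.mulVec (x i)))
        ≤ (V + ∑ i, Matrix.vecMulVec (x i) (x i)).det) := by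
  have hsum := hV.det_mul_one_add_sum_le_det_add_sum_vecMulVec x
  have hquad_nonneg (i : Fin m) : 0 ≤ x i ⬝ᵥ V⁻¹ *ᵥ x i := by
    simpa using hV.inv.posSemidef.dotProduct_mulVec_nonneg (x i)
  refine ⟨hsum, fun hm => le_trans ?_ hsum⟩
  gcongr V.det * (1 + ?_)
  · exact hV.det_pos.le
  · exact Finset.sup'_le _ _ fun i _ =>
      Finset.single_le_sum (fun j _ => hquad_nonneg j) (Finset.mem_univ i)
end

section
/- Deterministic recursion for self-normalized sums: Let t ≥ 1, let φ_1, …, φ_{t−1} ∈ ℝ^d, and let V_1, …, V_t ∈ ℝ^{d×d} be symmetric positive definite matrices satisfying V_s ⪯ V_{s+1} (Loewner order) for all s = 1, …, t−1. Define s_k := ∑_{s=1}^{k−1} φ_s for k = 1, …, t (so s_1 = 0). Then s_tᵀ V_t^{-1} s_t ≤ ∑_{s=1}^{t−1} φ_sᵀ V_s^{-1} φ_s + 2 ∑_{s=1}^{t−1} φ_sᵀ V_{s+1}^{-1} s_s. -/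
open Matrix

/-!
With `q k := s_kᵀ V_k⁻¹ s_k` and `q 1 = 0`, the left-hand side is the telescoping sum of the
increments `q (k+1) - q k`. Expanding `s_{k+1} = s_k + φ_k` in the quadratic form of `V_{k+1}⁻¹`
gives a cross term `2 φ_kᵀ V_{k+1}⁻¹ s_k` and two squares, and both squares only grow when
`V_{k+1}⁻¹` is replaced by `V_k⁻¹`, because `V_k ⪯ V_{k+1}` implies `V_{k+1}⁻¹ ⪯ V_k⁻¹`.
-/

namespace Matrix

variable {ι : Type*} [Fintype ι]

lemma IsSymm.dotProduct_mulVec_comm {M : Matrix ι ι ℝ} (hM : M.IsSymm) (x y : ι → ℝ) :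
    x ⬝ᵥ M *ᵥ y = y ⬝ᵥ M *ᵥ x := by
  rw [← dotProduct_transpose_mulVec, hM.eq]

lemma IsSymm.add_dotProduct_mulVec_add {M : Matrix ι ι ℝ} (hM : M.IsSymm) (x y : ι → ℝ) :
    (x + y) ⬝ᵥ M *ᵥ (x + y) = x ⬝ᵥ M *ᵥ x + y ⬝ᵥ M *ᵥ y + 2 * (y ⬝ᵥ M *ᵥ x) := by
  rw [add_dotProduct, mulVec_add, dotProduct_add, dotProduct_add, hM.dotProduct_mulVec_comm x y]
  ring

variable [DecidableEq ι]

lemma PosDef.dotProduct_inv_mulVec_le {A B : Matrix ι ι ℝ} (hA : A.PosDef)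
    (hB : B.PosDef) (hAB : (B - A).PosSemidef) (x : ι → ℝ) :
    x ⬝ᵥ B⁻¹ *ᵥ x ≤ x ⬝ᵥ A⁻¹ *ᵥ x := by
  set y := B⁻¹ *ᵥ x
  have hBy : B *ᵥ y = x := by simp [y, mulVec_mulVec, mul_nonsing_inv B hB.det_pos.ne'.isUnit]
  have hAy : A⁻¹ *ᵥ (A *ᵥ y) = y := by simp [mulVec_mulVec, nonsing_inv_mul A hA.det_pos.ne'.isUnit]
  have hAinv : A⁻¹.IsSymm := isHermitian_iff_isSymm.mp hA.inv.isHermitian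
  -- `0 ≤ (x - A y)ᵀ A⁻¹ (x - A y)` and `yᵀ A y ≤ yᵀ B y = xᵀ y` for `y = B⁻¹ x`
  have hsq : 0 ≤ x ⬝ᵥ A⁻¹ *ᵥ x - 2 * (x ⬝ᵥ y) + y ⬝ᵥ A *ᵥ y :=
    calc 0 ≤ star (x - A *ᵥ y) ⬝ᵥ A⁻¹ *ᵥ (x - A *ᵥ y) :=
          hA.inv.posSemidef.dotProduct_mulVec_nonneg _
      _ = _ := by
          rw [star_trivial, mulVec_sub, hAy, sub_dotProduct, dotProduct_sub, dotProduct_sub,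
            hAinv.dotProduct_mulVec_comm (A *ᵥ y), hAy, dotProduct_comm (A *ᵥ y)]
          ring
  have hyAy : y ⬝ᵥ A *ᵥ y ≤ x ⬝ᵥ y := by
    have := hAB.dotProduct_mulVec_nonneg y
    rwa [star_trivial, sub_mulVec, dotProduct_sub, hBy, dotProduct_comm y x, sub_nonneg] at this
  linarith

lemma PosDef.add_dotProduct_inv_mulVec_add_sub_le {A B : Matrix ι ι ℝ} (hA : A.PosDef)
    (hB : B.PosDef) (hAB : (B - A).PosSemidef) (x y : ι → ℝ) :
    (x + y) ⬝ᵥ B⁻¹ *ᵥ (x + y) - x ⬝ᵥ A⁻¹ *ᵥ x ≤ y ⬝ᵥ A⁻¹ *ᵥ y + 2 * (y ⬝ᵥ B⁻¹ *ᵥ x) := by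
  rw [(isHermitian_iff_isSymm.mp hB.inv.isHermitian).add_dotProduct_mulVec_add]
  linarith [hA.dotProduct_inv_mulVec_le hB hAB x, hA.dotProduct_inv_mulVec_le hB hAB y]

end Matrix

lemma Fin.sum_univ_succ_sub_castSucc {M : Type*} [AddCommGroup M] {n : ℕ} (f : Fin (n + 1) → M) :
    ∑ i : Fin n, (f i.succ - f i.castSucc) = f (Fin.last n) - f 0 := by
  rw [Finset.sum_sub_distrib, eq_sub_of_add_eq' (Fin.sum_univ_succ f).symm,
    eq_sub_of_add_eq (Fin.sum_univ_castSucc f).symm]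
  abel

lemma Fin.sum_filter_val_lt_succ {M : Type*} [AddCommMonoid M] {n : ℕ} (f : Fin n → M) (k : Fin n) :
    ∑ s ∈ Finset.univ.filter (fun s : Fin n => (s : ℕ) < k + 1), f s
      = ∑ s ∈ Finset.univ.filter (fun s : Fin n => (s : ℕ) < k), f s + f k := by
  have hIio : Finset.univ.filter (fun s : Fin n => (s : ℕ) < k) = Finset.Iio k := by
    ext s
    simp only [Finset.mem_filter, Finset.mem_univ, true_and, Finset.mem_Iio, Fin.lt_def]
  have hIic : Finset.univ.filter (fun s : Fin n => (s : ℕ) < k + 1) = Finset.Iic k := by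
    ext s
    simp only [Finset.mem_filter, Finset.mem_univ, true_and, Finset.mem_Iic, Fin.le_def,
      Nat.lt_succ_iff]
  rw [hIio, hIic, Finset.sum_Iio_add_eq_sum_Iic]

/-- **Deterministic recursion for self-normalized sums.**
With `t = n + 1 ≥ 1`, vectors `φ_1, …, φ_{t−1}` (indexed by `Fin n`),
positive definite matrices `V_1, …, V_t` (indexed by `Fin (n+1)`)
nondecreasing in the Loewner order, and partial sums
`s_k := ∑_{s < k} φ_s` (so `s_1 = 0`), one has
`s_tᵀ V_t⁻¹ s_t ≤ ∑_s φ_sᵀ V_s⁻¹ φ_s + 2 ∑_s φ_sᵀ V_{s+1}⁻¹ s_s`. -/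
theorem self_normalized_sum_recursion
    (d n : ℕ) (φ : Fin n → (Fin d → ℝ))
    (V : Fin (n + 1) → Matrix (Fin d) (Fin d) ℝ)
    (hVpd : ∀ k, (V k).PosDef)
    (hmono : ∀ s : Fin n, (V s.succ - V s.castSucc).PosSemidef)
    (S : Fin (n + 1) → (Fin d → ℝ))
    (hS : ∀ k : Fin (n + 1),
      S k = ∑ s ∈ Finset.univ.filter (fun s : Fin n => (s : ℕ) < (k : ℕ)), φ s) :
    S (Fin.last n) ⬝ᵥ (V (Fin.last n))⁻¹.mulVec (S (Fin.last n))
      ≤ (∑ s : Fin n, φ s ⬝ᵥ (V s.castSucc)⁻¹.mulVec (φ s))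
        + 2 * ∑ s : Fin n, φ s ⬝ᵥ (V s.succ)⁻¹.mulVec (S s.castSucc) := by
  have hS0 : S 0 = 0 := by simp [hS]
  have hS_succ (s : Fin n) : S s.succ = S s.castSucc + φ s := by
    rw [hS, hS, Fin.val_succ, Fin.val_castSucc, Fin.sum_filter_val_lt_succ]
  set q : Fin (n + 1) → ℝ := fun k => S k ⬝ᵥ (V k)⁻¹ *ᵥ S k
  calc q (Fin.last n) = ∑ s : Fin n, (q s.succ - q s.castSucc) := by
        rw [Fin.sum_univ_succ_sub_castSucc q]
        simp [q, hS0]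
    _ ≤ ∑ s : Fin n, (φ s ⬝ᵥ (V s.castSucc)⁻¹ *ᵥ φ s + 2 * (φ s ⬝ᵥ (V s.succ)⁻¹ *ᵥ S s.castSucc)) :=
        Finset.sum_le_sum fun s _ => by
          simpa only [q, hS_succ] using
            (hVpd s.castSucc).add_dotProduct_inv_mulVec_add_sub_le (hVpd s.succ) (hmono s) _ _
    _ = _ := by rw [Finset.sum_add_distrib, Finset.mul_sum]
end

section
/- Optimistic utility estimate (deterministic form of the paper's Lemma on optimism): Let f : ℝ^n → ℝ be twice continuously differentiable with ‖∇²f(w)‖_op ≤ C_h for all w ∈ ℝ^n, where C_h > 0. Let λ > 0 and let V ∈ ℝ^{n×n} be symmetric with V ⪰ λ I_n. Let β > 0 and let ŵ, w* ∈ ℝ^n satisfy ‖ŵ − w*‖²_V ≤ β. Define z := f(ŵ) + √β · ‖∇f(ŵ)‖_{V^{-1}} + β C_h / λ. Then 0 ≤ z − f(w*) ≤ 2√β · ‖∇f(ŵ)‖_{V^{-1}} + 2 β C_h / λ. -/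
/-!
By Taylor's theorem with the mean-value remainder (constant `C_h` rather than `C_h / 2`, which
suffices), `f w* = f ŵ + ⟪∇f ŵ, w* - ŵ⟫ ± C_h ‖w* - ŵ‖²`, and `V ⪰ λ I` turns the hypothesis
`‖ŵ - w*‖²_V ≤ β` into `‖ŵ - w*‖² ≤ β / λ`. The linear term is controlled by the Cauchy–Schwarz
inequality for the pair of dual norms, `|⟪g, d⟫| ≤ ‖g‖_{V⁻¹} ‖d‖_V ≤ √β ‖g‖_{V⁻¹}`. The two
inequalities of the theorem are the two sides of the resulting bound on `f w* - f ŵ`.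
-/

open Matrix Set

section Taylor

variable {E F : Type*} [NormedAddCommGroup E] [NormedSpace ℝ E]
  [NormedAddCommGroup F] [NormedSpace ℝ F] {f : E → F} {C : ℝ}

theorem norm_fderiv_sub_fderiv_le_of_norm_iteratedFDeriv_two_le (hf : ContDiff ℝ 2 f)
    (hC : ∀ w, ‖iteratedFDeriv ℝ 2 f w‖ ≤ C) (x y : E) :
    ‖fderiv ℝ f y - fderiv ℝ f x‖ ≤ C * ‖y - x‖ := by
  have hdiff : Differentiable ℝ (fderiv ℝ f) :=
    (hf.fderiv_right (m := 1) le_rfl).differentiable one_ne_zero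
  refine convex_univ.norm_image_sub_le_of_norm_fderiv_le (fun w _ => hdiff w)
    (fun w _ => ?_) (mem_univ x) (mem_univ y)
  rw [← norm_iteratedFDeriv_one, norm_iteratedFDeriv_fderiv]
  exact hC w

theorem norm_sub_sub_fderiv_apply_le_of_norm_iteratedFDeriv_two_le (hf : ContDiff ℝ 2 f)
    (hC : ∀ w, ‖iteratedFDeriv ℝ 2 f w‖ ≤ C) (x y : E) :
    ‖f y - f x - fderiv ℝ f x (y - x)‖ ≤ C * ‖y - x‖ ^ 2 := by
  have hC0 : 0 ≤ C := (norm_nonneg _).trans (hC x)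
  have bound : ∀ w ∈ segment ℝ x y, ‖fderiv ℝ f w - fderiv ℝ f x‖ ≤ C * ‖y - x‖ := fun w hw =>
    (norm_fderiv_sub_fderiv_le_of_norm_iteratedFDeriv_two_le hf hC x w).trans
      (mul_le_mul_of_nonneg_left (norm_sub_le_of_mem_segment hw) hC0)
  calc ‖f y - f x - fderiv ℝ f x (y - x)‖ ≤ C * ‖y - x‖ * ‖y - x‖ :=
        (convex_segment x y).norm_image_sub_le_of_norm_fderiv_le'
          (fun w _ => hf.differentiable two_ne_zero w) bound
          (left_mem_segment ℝ x y) (right_mem_segment ℝ x y)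
    _ = C * ‖y - x‖ ^ 2 := by ring

end Taylor

namespace Matrix

variable {ι : Type*} {V : Matrix ι ι ℝ}

theorem posDef_of_posSemidef_sub_smul_one [DecidableEq ι] {lam : ℝ} (hlam : 0 < lam)
    (hV : (V - lam • 1).PosSemidef) : V.PosDef := by
  simpa using PosDef.posSemidef_add hV (PosDef.one.smul hlam)

variable [Fintype ι]

theorem PosSemidef.dotProduct_mulVec_sq_le (hV : V.PosSemidef) (x y : ι → ℝ) :
    (x ⬝ᵥ V *ᵥ y) ^ 2 ≤ (x ⬝ᵥ V *ᵥ x) * (y ⬝ᵥ V *ᵥ y) := by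
  let _ := V.toSeminormedAddCommGroup hV
  let _ := V.toInnerProductSpace hV
  have := real_inner_mul_inner_self_le x y
  -- the inner product induced by `V` is `⟪x, y⟫ = V *ᵥ y ⬝ᵥ x`
  change (V *ᵥ y ⬝ᵥ x) * (V *ᵥ y ⬝ᵥ x) ≤ (V *ᵥ x ⬝ᵥ x) * (V *ᵥ y ⬝ᵥ y) at this
  simpa only [dotProduct_comm _ x, dotProduct_comm _ y, sq] using this

theorem IsHermitian.dotProduct_mulVec_comm (hV : V.IsHermitian) (x y : ι → ℝ) :
    x ⬝ᵥ V *ᵥ y = V *ᵥ x ⬝ᵥ y := by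
  rw [dotProduct_mulVec, ← vecMul_transpose, (isHermitian_iff_isSymm.mp hV).eq]

theorem PosDef.abs_dotProduct_le [DecidableEq ι] (hV : V.PosDef) (g d : ι → ℝ) :
    |g ⬝ᵥ d| ≤ √(g ⬝ᵥ V⁻¹ *ᵥ g) * √(d ⬝ᵥ V *ᵥ d) := by
  set x := V⁻¹ *ᵥ g
  have hVx : V *ᵥ x = g := by
    rw [mulVec_mulVec, mul_nonsing_inv _ ((isUnit_iff_isUnit_det V).mp hV.isUnit), one_mulVec]
  have hxd : x ⬝ᵥ V *ᵥ d = g ⬝ᵥ d := by rw [hV.isHermitian.dotProduct_mulVec_comm, hVx]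
  have hxx : x ⬝ᵥ V *ᵥ x = g ⬝ᵥ x := by rw [hVx, dotProduct_comm]
  have hxx0 : 0 ≤ x ⬝ᵥ V *ᵥ x := by simpa using hV.posSemidef.dotProduct_mulVec_nonneg x
  rw [← hxd, ← hxx, ← Real.sqrt_mul hxx0, ← Real.sqrt_sq_eq_abs]
  exact Real.sqrt_le_sqrt (hV.posSemidef.dotProduct_mulVec_sq_le x d)

end Matrix

namespace EuclideanSpace

variable {ι : Type*} [Fintype ι]

theorem fderiv_apply_eq_dotProduct_gradient {f : EuclideanSpace ℝ ι → ℝ}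
    (x v : EuclideanSpace ℝ ι) :
    fderiv ℝ f x v = WithLp.equiv 2 (ι → ℝ) (gradient f x) ⬝ᵥ WithLp.equiv 2 (ι → ℝ) v := by
  rw [← toDual_gradient, InnerProductSpace.toDual_apply_apply, inner_eq_star_dotProduct,
    dotProduct_comm]
  rfl

theorem mul_norm_sq_le_dotProduct_mulVec [DecidableEq ι] {V : Matrix ι ι ℝ} {lam : ℝ}
    (hV : (V - lam • 1).PosSemidef) (v : EuclideanSpace ℝ ι) :
    lam * ‖v‖ ^ 2 ≤ WithLp.equiv 2 (ι → ℝ) v ⬝ᵥ V *ᵥ WithLp.equiv 2 (ι → ℝ) v := by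
  have h := hV.dotProduct_mulVec_nonneg (WithLp.equiv 2 (ι → ℝ) v)
  rw [← real_inner_self_eq_norm_sq, inner_eq_star_dotProduct]
  simp only [star_trivial, sub_mulVec, smul_mulVec, one_mulVec, dotProduct_sub,
    dotProduct_smul, smul_eq_mul, sub_nonneg] at h
  exact h

end EuclideanSpace

theorem optimistic_utility_estimate_general
    (n : ℕ) (Ch lam : ℝ) (hlam : 0 < lam)
    (f : EuclideanSpace ℝ (Fin n) → ℝ) (hf : ContDiff ℝ 2 f)
    (hHess : ∀ w : EuclideanSpace ℝ (Fin n), ‖iteratedFDeriv ℝ 2 f w‖ ≤ Ch)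
    (V : Matrix (Fin n) (Fin n) ℝ)
    (hV : (V - lam • (1 : Matrix (Fin n) (Fin n) ℝ)).PosSemidef)
    (β : ℝ)
    (what wstar : EuclideanSpace ℝ (Fin n))
    (hclose : (WithLp.equiv 2 (Fin n → ℝ) (what - wstar))
        ⬝ᵥ V.mulVec (WithLp.equiv 2 (Fin n → ℝ) (what - wstar)) ≤ β)
    (z : ℝ)
    (hz : z = f what
      + Real.sqrt β * Real.sqrt ((WithLp.equiv 2 (Fin n → ℝ) (gradient f what))
          ⬝ᵥ V⁻¹.mulVec (WithLp.equiv 2 (Fin n → ℝ) (gradient f what)))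
      + β * Ch / lam) :
    0 ≤ z - f wstar ∧
      z - f wstar ≤ 2 * Real.sqrt β
          * Real.sqrt ((WithLp.equiv 2 (Fin n → ℝ) (gradient f what))
              ⬝ᵥ V⁻¹.mulVec (WithLp.equiv 2 (Fin n → ℝ) (gradient f what)))
        + 2 * β * Ch / lam := by
  set G := √(WithLp.equiv 2 (Fin n → ℝ) (gradient f what)
    ⬝ᵥ V⁻¹ *ᵥ WithLp.equiv 2 (Fin n → ℝ) (gradient f what))
  have hCh : 0 ≤ Ch := (norm_nonneg _).trans (hHess what)
  have hdist : ‖what - wstar‖ ^ 2 ≤ β / lam := by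
    rw [le_div_iff₀' hlam]
    exact (EuclideanSpace.mul_norm_sq_le_dotProduct_mulVec hV _).trans hclose
  have hlin : |fderiv ℝ f what (what - wstar)| ≤ G * √β := by
    rw [EuclideanSpace.fderiv_apply_eq_dotProduct_gradient]
    exact ((posDef_of_posSemidef_sub_smul_one hlam hV).abs_dotProduct_le _ _).trans
      (by gcongr)
  have htaylor : |f wstar - f what + fderiv ℝ f what (what - wstar)| ≤ β * Ch / lam := by
    have h := norm_sub_sub_fderiv_apply_le_of_norm_iteratedFDeriv_two_le hf hHess what wstar
    rw [← neg_sub what wstar, map_neg, sub_neg_eq_add, norm_neg, Real.norm_eq_abs] at h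
    exact h.trans (by rw [mul_comm β, mul_div_assoc]; gcongr)
  rw [abs_le] at hlin htaylor
  have hβCh : 2 * β * Ch / lam = 2 * (β * Ch / lam) := by ring
  constructor <;> linarith

/-- **Optimistic utility estimate (deterministic form).**
Let `f : ℝ^n → ℝ` be `C²` with Hessian operator norm at most `C_h`, let
`V ⪰ λ I_n` be symmetric with `λ > 0`, and suppose `‖ŵ − w*‖²_V ≤ β` with
`β > 0`. Then the optimistic estimate
`z := f(ŵ) + √β ‖∇f(ŵ)‖_{V⁻¹} + β C_h / λ` satisfies
`0 ≤ z − f(w*) ≤ 2√β ‖∇f(ŵ)‖_{V⁻¹} + 2 β C_h / λ`. -/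
theorem optimistic_utility_estimate
    (n : ℕ) (Ch lam : ℝ) (hCh : 0 < Ch) (hlam : 0 < lam)
    (f : EuclideanSpace ℝ (Fin n) → ℝ) (hf : ContDiff ℝ 2 f)
    (hHess : ∀ w : EuclideanSpace ℝ (Fin n), ‖iteratedFDeriv ℝ 2 f w‖ ≤ Ch)
    (V : Matrix (Fin n) (Fin n) ℝ) (hVsymm : V.IsHermitian)
    (hV : (V - lam • (1 : Matrix (Fin n) (Fin n) ℝ)).PosSemidef)
    (β : ℝ) (hβ : 0 < β)
    (what wstar : EuclideanSpace ℝ (Fin n))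
    (hclose : (WithLp.equiv 2 (Fin n → ℝ) (what - wstar))
        ⬝ᵥ V.mulVec (WithLp.equiv 2 (Fin n → ℝ) (what - wstar)) ≤ β)
    (z : ℝ)
    (hz : z = f what
      + Real.sqrt β * Real.sqrt ((WithLp.equiv 2 (Fin n → ℝ) (gradient f what))
          ⬝ᵥ V⁻¹.mulVec (WithLp.equiv 2 (Fin n → ℝ) (gradient f what)))
      + β * Ch / lam) :
    0 ≤ z - f wstar ∧
      z - f wstar ≤ 2 * Real.sqrt β
          * Real.sqrt ((WithLp.equiv 2 (Fin n → ℝ) (gradient f what))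
              ⬝ᵥ V⁻¹.mulVec (WithLp.equiv 2 (Fin n → ℝ) (gradient f what)))
        + 2 * β * Ch / lam :=
  optimistic_utility_estimate_general n Ch lam hlam f hf hHess V hV β what wstar hclose z hz
end

section
/- Integrated Hessian lower bound under the self-concordant-like property: Let ℓ : ℝ^n → ℝ be twice continuously differentiable and let M ≥ 0 be such that for all x, y ∈ ℝ^n, ∇²ℓ(y) ⪰ exp(−M ‖y − x‖₂) ∇²ℓ(x) in the Loewner order. Then for any w₁, w₂ ∈ ℝ^n, the matrix G := ∫₀¹ ∇²ℓ(w₁ + z (w₂ − w₁)) dz satisfies G ⪰ (1 / (1 + M ‖w₂ − w₁‖₂)) ∇²ℓ(w₁). -/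
/-!
Restricted to a direction `v`, the quadratic form `q x = ∇²ℓ(x)[v, v]` satisfies
`q (w₁ + z (w₂ - w₁)) ≥ exp (-c z) q w₁` with `c = M ‖w₂ - w₁‖`, so integrating over `z ∈ [0, 1]`
gives `∫ q ≥ (1 - e⁻ᶜ) / c · q w₁ ≥ q w₁ / (1 + c)`, the last step being `1 + c ≤ eᶜ`. It needs
`q w₁ ≥ 0`, which holds as soon as `c > 0`: applying the hypothesis in both directions gives
`e^{-2c} q w₁ ≤ q w₁`.
-/

open Real

lemma integral_exp_neg_mul_unitInterval {c : ℝ} (hc : c ≠ 0) :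
    ∫ z in (0:ℝ)..1, exp (-(c * z)) = (1 - exp (-c)) / c := by
  simp_rw [← neg_mul]
  rw [intervalIntegral.integral_comp_mul_left (fun x => exp x) (neg_ne_zero.2 hc),
    integral_exp, mul_one, mul_zero, exp_zero, smul_eq_mul]
  field_simp
  ring

lemma one_div_one_add_le_integral_exp_neg_mul {c : ℝ} (hc : 0 ≤ c) :
    1 / (1 + c) ≤ ∫ z in (0:ℝ)..1, exp (-(c * z)) := by
  rcases hc.eq_or_lt with rfl | hc
  · simp
  rw [integral_exp_neg_mul_unitInterval hc.ne', div_le_div_iff₀ (by positivity) hc]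
  have h : (1 + c) * exp (-c) ≤ 1 :=
    calc (1 + c) * exp (-c) ≤ exp c * exp (-c) := by
          gcongr; linarith [add_one_le_exp c]
      _ = 1 := by rw [← exp_add, add_neg_cancel, exp_zero]
  linarith

lemma nonneg_of_exp_neg_mul_norm_sub_le {E : Type*} [SeminormedAddCommGroup E] {q : E → ℝ}
    {M : ℝ} (hq : ∀ x y, exp (-(M * ‖y - x‖)) * q x ≤ q y) {x y : E}
    (hxy : 0 < M * ‖y - x‖) : 0 ≤ q x := by
  set e := exp (-(M * ‖y - x‖))
  have he : e < 1 := exp_lt_one_iff.2 (neg_lt_zero.2 hxy)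
  have he₀ : 0 < e := exp_pos _
  have hyx : e * q y ≤ q x := by simpa only [e, norm_sub_rev x y] using hq y x
  have : e * (e * q x) ≤ q x := (mul_le_mul_of_nonneg_left (hq x y) he₀.le).trans hyx
  nlinarith [mul_pos (sub_pos.2 he) he₀]

section NormedSpace

variable {E : Type*} [SeminormedAddCommGroup E] [NormedSpace ℝ E]

lemma exp_neg_mul_le_apply_add_smul {q : E → ℝ} {M : ℝ}
    (hq : ∀ x y, exp (-(M * ‖y - x‖)) * q x ≤ q y) (w₁ w₂ : E) {z : ℝ} (hz : 0 ≤ z) :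
    exp (-(M * ‖w₂ - w₁‖ * z)) * q w₁ ≤ q (w₁ + z • (w₂ - w₁)) := by
  have h := hq w₁ (w₁ + z • (w₂ - w₁))
  rw [add_sub_cancel_left, norm_smul, norm_of_nonneg hz] at h
  convert h using 4
  ring

theorem one_div_one_add_mul_le_integral_of_exp_neg_mul_le {q : E → ℝ} (hq_cont : Continuous q)
    {M : ℝ} (hM : 0 ≤ M) (hq : ∀ x y, exp (-(M * ‖y - x‖)) * q x ≤ q y) (w₁ w₂ : E) :
    1 / (1 + M * ‖w₂ - w₁‖) * q w₁ ≤ ∫ z in (0:ℝ)..1, q (w₁ + z • (w₂ - w₁)) := by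
  set c := M * ‖w₂ - w₁‖
  have hc : 0 ≤ c := by positivity
  calc 1 / (1 + c) * q w₁ ≤ (∫ z in (0:ℝ)..1, exp (-(c * z))) * q w₁ := by
        rcases hc.eq_or_lt with hc | hc
        · simp [← hc]
        exact mul_le_mul_of_nonneg_right (one_div_one_add_le_integral_exp_neg_mul hc.le)
          (nonneg_of_exp_neg_mul_norm_sub_le hq hc)
    _ = ∫ z in (0:ℝ)..1, exp (-(c * z)) * q w₁ := (intervalIntegral.integral_mul_const _ _).symm
    _ ≤ ∫ z in (0:ℝ)..1, q (w₁ + z • (w₂ - w₁)) :=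
        intervalIntegral.integral_mono_on zero_le_one
          (by apply Continuous.intervalIntegrable; fun_prop)
          (by apply Continuous.intervalIntegrable; fun_prop)
          fun z hz => exp_neg_mul_le_apply_add_smul hq w₁ w₂ hz.1

end NormedSpace

/-- **Integrated Hessian lower bound under the self-concordant-like property.**
If `ℓ : ℝ^n → ℝ` is `C²` and `M ≥ 0` satisfies
`∇²ℓ(y) ⪰ exp(−M ‖y − x‖₂) ∇²ℓ(x)` for all `x, y` (stated via quadratic
forms), then the averaged Hessian `G := ∫₀¹ ∇²ℓ(w₁ + z (w₂ − w₁)) dz`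
satisfies `G ⪰ (1 / (1 + M ‖w₂ − w₁‖₂)) ∇²ℓ(w₁)`, i.e. the corresponding
quadratic-form inequality holds for every vector `v`. -/
theorem integrated_hessian_lower_bound
    (n : ℕ) (ℓ : EuclideanSpace ℝ (Fin n) → ℝ) (hℓ : ContDiff ℝ 2 ℓ)
    (M : ℝ) (hM : 0 ≤ M)
    (hsc : ∀ x y v : EuclideanSpace ℝ (Fin n),
      Real.exp (-(M * ‖y - x‖)) * iteratedFDeriv ℝ 2 ℓ x ![v, v]
        ≤ iteratedFDeriv ℝ 2 ℓ y ![v, v])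
    (w₁ w₂ : EuclideanSpace ℝ (Fin n)) :
    ∀ v : EuclideanSpace ℝ (Fin n),
      (1 / (1 + M * ‖w₂ - w₁‖)) * iteratedFDeriv ℝ 2 ℓ w₁ ![v, v]
        ≤ ∫ z in (0:ℝ)..1, iteratedFDeriv ℝ 2 ℓ (w₁ + z • (w₂ - w₁)) ![v, v] := by
  intro v
  have hcont : Continuous fun x => iteratedFDeriv ℝ 2 ℓ x ![v, v] :=
    (continuous_eval_const _).comp (hℓ.continuous_iteratedFDeriv le_rfl)
  exact one_div_one_add_mul_le_integral_of_exp_neg_mul_le hcont hM (fun x y => hsc x y v) w₁ w₂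
end

section
/- Bridge inequality between parameter distance and gradient difference: Let ℓ : ℝ^n → ℝ be twice continuously differentiable and let M ≥ 0 be such that for all x, y ∈ ℝ^n, ∇²ℓ(y) ⪰ exp(−M ‖y − x‖₂) ∇²ℓ(x) in the Loewner order. Let w₁, w₂ ∈ ℝ^n and suppose ∇²ℓ(w₁) is positive definite. Then ‖w₁ − w₂‖²_{∇²ℓ(w₁)} ≤ (1 + M ‖w₂ − w₁‖₂)² · ‖∇ℓ(w₁) − ∇ℓ(w₂)‖²_{(∇²ℓ(w₁))^{-1}}. -/
/-!
Along the segment `w₁ + t (w₂ - w₁)`, the fundamental theorem of calculus gives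
`⟪∇ℓ(w₂) - ∇ℓ(w₁), w₂ - w₁⟫ = ∫₀¹ ∇²ℓ(w₁ + t (w₂ - w₁))[w₂ - w₁, w₂ - w₁] dt`, and the
exponential lower bound on the Hessian makes this at least
`‖w₂ - w₁‖²_H ∫₀¹ e^{-M ‖w₂ - w₁‖ t} dt ≥ ‖w₂ - w₁‖²_H / (1 + M ‖w₂ - w₁‖)`.
Cauchy–Schwarz in the pair of dual norms `‖·‖_H`, `‖·‖_{H⁻¹}` bounds the left side by
`‖w₂ - w₁‖_H ‖∇ℓ(w₂) - ∇ℓ(w₁)‖_{H⁻¹}`; squaring and dividing by `‖w₂ - w₁‖²_H` finishes.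
-/

open Matrix Real

theorem one_le_one_add_mul_integral_exp_neg_mul {a : ℝ} (ha : 0 ≤ a) :
    1 ≤ (1 + a) * ∫ t in (0 : ℝ)..1, exp (-(a * t)) := by
  rcases ha.eq_or_lt with rfl | ha
  · simp
  have hint : a * ∫ t in (0 : ℝ)..1, exp (-(a * t)) = 1 - exp (-a) := by
    have := intervalIntegral.mul_integral_comp_mul_left (a := 0) (b := 1) (f := exp) (c := -a)
    simp only [integral_exp, mul_zero, mul_one, exp_zero, neg_mul] at this
    linarith
  have hexp : (1 + a) * exp (-a) ≤ 1 := by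
    calc (1 + a) * exp (-a) ≤ exp a * exp (-a) := by gcongr; linarith [add_one_le_exp a]
      _ = 1 := by rw [← exp_add, add_neg_cancel, exp_zero]
  nlinarith

theorem Matrix.PosDef.dotProduct_sq_le {m : Type*} [Fintype m] [DecidableEq m]
    {H : Matrix m m ℝ} (hH : H.PosDef) (u v : m → ℝ) :
    (v ⬝ᵥ u) ^ 2 ≤ (u ⬝ᵥ H *ᵥ u) * (v ⬝ᵥ H⁻¹ *ᵥ v) := by
  set w := H⁻¹ *ᵥ v
  have hHw : H *ᵥ w = v := by
    rw [mulVec_mulVec, mul_nonsing_inv H hH.det_pos.ne'.isUnit, one_mulVec]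
  have hsymm : Hᵀ = H := hH.isHermitian
  have hquad : ∀ s : ℝ,
      0 ≤ (u ⬝ᵥ H *ᵥ u) * (s * s) + (-(2 * (v ⬝ᵥ u))) * s + (v ⬝ᵥ w) := by
    intro s
    have h := hH.posSemidef.dotProduct_mulVec_nonneg (s • u - w)
    have hwu : w ⬝ᵥ H *ᵥ u = v ⬝ᵥ u := by
      rw [dotProduct_mulVec, ← hsymm, vecMul_transpose, hHw]
    simp only [star_trivial, mulVec_sub, mulVec_smul, hHw, sub_dotProduct, dotProduct_sub,
      smul_dotProduct, dotProduct_smul, smul_eq_mul, hwu, dotProduct_comm w v,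
      dotProduct_comm u v] at h
    nlinarith
  have hdiscrim := discrim_le_zero hquad
  rw [discrim] at hdiscrim
  nlinarith

section SecondOrder

variable {E : Type*} [NormedAddCommGroup E] [NormedSpace ℝ E] {ℓ : E → ℝ}

theorem ContDiff.continuous_iteratedFDeriv_two_add_smul (hℓ : ContDiff ℝ 2 ℓ) (x d : E) :
    Continuous fun t : ℝ => iteratedFDeriv ℝ 2 ℓ (x + t • d) ![d, d] := by
  have := hℓ.continuous_iteratedFDeriv (m := 2) le_rfl
  fun_prop

theorem integral_iteratedFDeriv_two_add_smul (hℓ : ContDiff ℝ 2 ℓ) (x d : E) :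
    ∫ t in (0 : ℝ)..1, iteratedFDeriv ℝ 2 ℓ (x + t • d) ![d, d]
      = fderiv ℝ ℓ (x + d) d - fderiv ℝ ℓ x d := by
  have hD : ContDiff ℝ 1 (fderiv ℝ ℓ) := hℓ.fderiv_right (by norm_num)
  have hderiv : ∀ t : ℝ, HasDerivAt (fun s : ℝ => fderiv ℝ ℓ (x + s • d) d)
      (iteratedFDeriv ℝ 2 ℓ (x + t • d) ![d, d]) t := by
    intro t
    have hline : HasDerivAt (fun s : ℝ => x + s • d) d t := by
      simpa using ((hasDerivAt_id t).smul_const d).const_add x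
    have := (((hD.differentiable one_ne_zero) _).hasFDerivAt.comp_hasDerivAt t hline).clm_apply
      (hasDerivAt_const t d)
    rw [iteratedFDeriv_two_apply]
    simpa using this
  rw [intervalIntegral.integral_eq_sub_of_hasDerivAt (fun t _ => hderiv t)
    ((hℓ.continuous_iteratedFDeriv_two_add_smul x d).intervalIntegrable 0 1)]
  simp

def SelfConcordantLike (M : ℝ) (ℓ : E → ℝ) : Prop :=
  ∀ x y v : E, exp (-(M * ‖y - x‖)) * iteratedFDeriv ℝ 2 ℓ x ![v, v]
    ≤ iteratedFDeriv ℝ 2 ℓ y ![v, v]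

theorem SelfConcordantLike.iteratedFDeriv_two_le_mul_fderiv_sub {M : ℝ}
    (hsc : SelfConcordantLike M ℓ) (hℓ : ContDiff ℝ 2 ℓ) (hM : 0 ≤ M) (x y : E)
    (hx : 0 ≤ iteratedFDeriv ℝ 2 ℓ x ![y - x, y - x]) :
    iteratedFDeriv ℝ 2 ℓ x ![y - x, y - x]
      ≤ (1 + M * ‖y - x‖) * (fderiv ℝ ℓ y (y - x) - fderiv ℝ ℓ x (y - x)) := by
  set d := y - x
  set Q := iteratedFDeriv ℝ 2 ℓ x ![d, d]
  have hFTC := integral_iteratedFDeriv_two_add_smul hℓ x d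
  rw [add_sub_cancel] at hFTC
  have hpoint : ∀ t ∈ Set.Icc (0 : ℝ) 1,
      Q * exp (-(M * ‖d‖ * t)) ≤ iteratedFDeriv ℝ 2 ℓ (x + t • d) ![d, d] := by
    intro t ht
    have := hsc x (x + t • d) d
    rwa [add_sub_cancel_left, norm_smul, norm_of_nonneg ht.1, mul_comm t, ← mul_assoc,
      mul_comm] at this
  have hmono : Q * ∫ t in (0 : ℝ)..1, exp (-(M * ‖d‖ * t))
      ≤ ∫ t in (0 : ℝ)..1, iteratedFDeriv ℝ 2 ℓ (x + t • d) ![d, d] := by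
    rw [← intervalIntegral.integral_const_mul]
    exact intervalIntegral.integral_mono_on zero_le_one
      ((by fun_prop : Continuous fun t : ℝ => Q * exp (-(M * ‖d‖ * t))).intervalIntegrable 0 1)
      ((hℓ.continuous_iteratedFDeriv_two_add_smul x d).intervalIntegrable 0 1) hpoint
  have hexp := one_le_one_add_mul_integral_exp_neg_mul (mul_nonneg hM (norm_nonneg d))
  calc Q ≤ Q * ((1 + M * ‖d‖) * ∫ t in (0 : ℝ)..1, exp (-(M * ‖d‖ * t))) :=
        le_mul_of_one_le_right hx hexp
    _ = (1 + M * ‖d‖) * (Q * ∫ t in (0 : ℝ)..1, exp (-(M * ‖d‖ * t))) := by ring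
    _ ≤ (1 + M * ‖d‖) * (fderiv ℝ ℓ y d - fderiv ℝ ℓ x d) := by
        rw [← hFTC]
        exact mul_le_mul_of_nonneg_left hmono (by positivity)

end SecondOrder

theorem le_sq_mul_of_le_mul_of_sq_le_mul {A B C c : ℝ} (hA : 0 ≤ A) (hC : 0 ≤ C)
    (hAB : A ≤ c * B) (hB : B ^ 2 ≤ A * C) : A ≤ c ^ 2 * C := by
  rcases hA.eq_or_lt with rfl | hA
  · positivity
  have hcB : 0 ≤ c * B := hA.le.trans hAB
  have : A * A ≤ A * (c ^ 2 * C) := by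
    calc A * A ≤ (c * B) ^ 2 := by nlinarith
      _ = c ^ 2 * B ^ 2 := by ring
      _ ≤ c ^ 2 * (A * C) := by gcongr
      _ = A * (c ^ 2 * C) := by ring
  exact le_of_mul_le_mul_left this hA

/-- **Bridge inequality between parameter distance and gradient difference.**
If `ℓ : ℝ^n → ℝ` is `C²`, `M ≥ 0` satisfies the self-concordant-like
property `∇²ℓ(y) ⪰ exp(−M ‖y − x‖₂) ∇²ℓ(x)` (stated via quadratic forms),
and `H` is the (symmetric, positive definite) Hessian matrix of `ℓ` at `w₁`,
then `‖w₁ − w₂‖²_H ≤ (1 + M ‖w₂ − w₁‖₂)² ‖∇ℓ(w₁) − ∇ℓ(w₂)‖²_{H⁻¹}`. -/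
theorem bridge_parameter_gradient
    (n : ℕ) (ℓ : EuclideanSpace ℝ (Fin n) → ℝ) (hℓ : ContDiff ℝ 2 ℓ)
    (M : ℝ) (hM : 0 ≤ M)
    (hsc : ∀ x y v : EuclideanSpace ℝ (Fin n),
      Real.exp (-(M * ‖y - x‖)) * iteratedFDeriv ℝ 2 ℓ x ![v, v]
        ≤ iteratedFDeriv ℝ 2 ℓ y ![v, v])
    (w₁ w₂ : EuclideanSpace ℝ (Fin n))
    (H : Matrix (Fin n) (Fin n) ℝ)
    (hH : ∀ v : EuclideanSpace ℝ (Fin n),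
      (WithLp.equiv 2 (Fin n → ℝ) v) ⬝ᵥ H.mulVec (WithLp.equiv 2 (Fin n → ℝ) v)
        = iteratedFDeriv ℝ 2 ℓ w₁ ![v, v])
    (hHpd : H.PosDef) :
    (WithLp.equiv 2 (Fin n → ℝ) (w₁ - w₂))
        ⬝ᵥ H.mulVec (WithLp.equiv 2 (Fin n → ℝ) (w₁ - w₂))
      ≤ (1 + M * ‖w₂ - w₁‖) ^ 2 *
        ((WithLp.equiv 2 (Fin n → ℝ) (gradient ℓ w₁ - gradient ℓ w₂))
          ⬝ᵥ H⁻¹.mulVec (WithLp.equiv 2 (Fin n → ℝ) (gradient ℓ w₁ - gradient ℓ w₂))) := by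
  set u := WithLp.equiv 2 (Fin n → ℝ) (w₁ - w₂) with hu_def
  set v := WithLp.equiv 2 (Fin n → ℝ) (gradient ℓ w₁ - gradient ℓ w₂)
  have hquad : u ⬝ᵥ H *ᵥ u = iteratedFDeriv ℝ 2 ℓ w₁ ![w₂ - w₁, w₂ - w₁] := by
    rw [← hH, hu_def, ← neg_sub w₂ w₁]
    simp only [WithLp.equiv_apply, WithLp.ofLp_neg, mulVec_neg, neg_dotProduct_neg]
  have hpair : fderiv ℝ ℓ w₂ (w₂ - w₁) - fderiv ℝ ℓ w₁ (w₂ - w₁) = v ⬝ᵥ u := by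
    rw [← inner_gradient_left, ← inner_gradient_left, ← inner_sub_left,
      ← neg_sub (gradient ℓ w₁), ← neg_sub w₁ w₂, inner_neg_neg,
      EuclideanSpace.inner_eq_star_dotProduct, star_trivial, dotProduct_comm]
    rfl
  have hu : 0 ≤ u ⬝ᵥ H *ᵥ u := by
    simpa using hHpd.posSemidef.dotProduct_mulVec_nonneg u
  have hv : 0 ≤ v ⬝ᵥ H⁻¹ *ᵥ v := by
    simpa using hHpd.inv.posSemidef.dotProduct_mulVec_nonneg v
  have hbridge : u ⬝ᵥ H *ᵥ u ≤ (1 + M * ‖w₂ - w₁‖) * (v ⬝ᵥ u) := by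
    rw [hquad, ← hpair]
    exact SelfConcordantLike.iteratedFDeriv_two_le_mul_fderiv_sub hsc hℓ hM w₁ w₂ (hquad ▸ hu)
  exact le_sq_mul_of_le_mul_of_sq_le_mul hu hv hbridge
    (hHpd.dotProduct_sq_le u v)
end

section
/- Bridge inequality relative to a reference matrix: Let ℓ : ℝ^n → ℝ be twice continuously differentiable, let M ≥ 0 be such that ∇²ℓ(y) ⪰ exp(−M ‖y − x‖₂) ∇²ℓ(x) for all x, y ∈ ℝ^n, let V ∈ ℝ^{n×n} be symmetric positive definite, and let κ > 0 be such that ∇²ℓ(w) ⪰ κ V for all w ∈ ℝ^n. Then for all w₁, w₂ ∈ ℝ^n, ‖w₁ − w₂‖²_V ≤ (1 + M ‖w₂ − w₁‖₂)² · κ^{-2} · ‖∇ℓ(w₁) − ∇ℓ(w₂)‖²_{V^{-1}}. -/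
/-!
The lower bound `∇²ℓ ⪰ κ V`, integrated along the segment from `w₂` to `w₁`, makes `∇ℓ` strongly
monotone: `κ ‖d‖²_V ≤ ⟪d, g⟫` for `d = w₁ - w₂` and `g = ∇ℓ(w₁) - ∇ℓ(w₂)`. Expanding
`0 ≤ ‖d - κ⁻¹ V⁻¹ g‖²_V` then gives `‖d‖²_V ≤ κ⁻² ‖g‖²_{V⁻¹}`, and the factor
`(1 + M ‖w₂ - w₁‖)²` is at least `1`.
-/

open Matrix

theorem le_fderiv_add_sub_fderiv_of_le_iteratedFDeriv_two {E : Type*} [NormedAddCommGroup E]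
    [NormedSpace ℝ E] {f : E → ℝ} (hf : ContDiff ℝ 2 f) {c : ℝ} (x d : E)
    (h : ∀ t : ℝ, c ≤ iteratedFDeriv ℝ 2 f (x + t • d) ![d, d]) :
    c ≤ fderiv ℝ f (x + d) d - fderiv ℝ f x d := by
  have hf' : Differentiable ℝ (fderiv ℝ f) :=
    (hf.fderiv_right (m := 1) le_rfl).differentiable one_ne_zero
  have hderiv (t : ℝ) : HasDerivAt (fun t : ℝ => fderiv ℝ f (x + t • d) d)
      (iteratedFDeriv ℝ 2 f (x + t • d) ![d, d]) t := by
    have hline : HasDerivAt (fun t : ℝ => x + t • d) d t := by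
      simpa using ((hasDerivAt_id t).smul_const d).const_add x
    rw [iteratedFDeriv_two_apply]
    exact (ContinuousLinearMap.apply ℝ ℝ d).hasFDerivAt.comp_hasDerivAt t
      ((hf' _).hasFDerivAt.comp_hasDerivAt t hline)
  simpa using mul_sub_le_image_sub_of_le_deriv (fun t => (hderiv t).differentiableAt)
    (fun t => (hderiv t).deriv ▸ h t) zero_le_one

theorem Matrix.PosDef.dotProduct_mulVec_le_inv_sq_mul {ι : Type*} [Fintype ι] [DecidableEq ι]
    {V : Matrix ι ι ℝ} (hV : V.PosDef) {κ : ℝ} (hκ : 0 < κ) {x g : ι → ℝ}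
    (h : κ * (x ⬝ᵥ V *ᵥ x) ≤ x ⬝ᵥ g) :
    x ⬝ᵥ V *ᵥ x ≤ κ⁻¹ ^ 2 * (g ⬝ᵥ V⁻¹ *ᵥ g) := by
  set b := V⁻¹ *ᵥ g
  have hVb : V *ᵥ b = g := by
    rw [mulVec_mulVec, mul_nonsing_inv _ (isUnit_iff_isUnit_det V |>.mp hV.isUnit), one_mulVec]
  have hbV : b ᵥ* V = g := by
    rw [← mulVec_transpose, (isHermitian_iff_isSymm.mp hV.isHermitian).eq, hVb]
  have hexpand : (x - κ⁻¹ • b) ⬝ᵥ V *ᵥ (x - κ⁻¹ • b)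
      = x ⬝ᵥ V *ᵥ x - 2 * κ⁻¹ * (x ⬝ᵥ g) + κ⁻¹ ^ 2 * (g ⬝ᵥ b) := by
    simp only [mulVec_sub, mulVec_smul, sub_dotProduct, dotProduct_sub, smul_dotProduct,
      dotProduct_smul, smul_eq_mul, hVb, dotProduct_mulVec b, hbV, dotProduct_comm b g,
      dotProduct_comm g x]
    ring
  have hnonneg : 0 ≤ (x - κ⁻¹ • b) ⬝ᵥ V *ᵥ (x - κ⁻¹ • b) := by
    simpa using hV.posSemidef.dotProduct_mulVec_nonneg (x - κ⁻¹ • b)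
  have hle : x ⬝ᵥ V *ᵥ x ≤ κ⁻¹ * (x ⬝ᵥ g) := by
    rwa [le_inv_mul_iff₀ hκ]
  linarith

theorem bridge_reference_matrix_general
    (n : ℕ) (ℓ : EuclideanSpace ℝ (Fin n) → ℝ) (hℓ : ContDiff ℝ 2 ℓ)
    (M : ℝ) (hM : 0 ≤ M)
    (V : Matrix (Fin n) (Fin n) ℝ) (hVpd : V.PosDef)
    (κ : ℝ) (hκ : 0 < κ)
    (hlow : ∀ (w v : EuclideanSpace ℝ (Fin n)),
      κ * ((WithLp.equiv 2 (Fin n → ℝ) v) ⬝ᵥ V.mulVec (WithLp.equiv 2 (Fin n → ℝ) v))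
        ≤ iteratedFDeriv ℝ 2 ℓ w ![v, v])
    (w₁ w₂ : EuclideanSpace ℝ (Fin n)) :
    (WithLp.equiv 2 (Fin n → ℝ) (w₁ - w₂))
        ⬝ᵥ V.mulVec (WithLp.equiv 2 (Fin n → ℝ) (w₁ - w₂))
      ≤ (1 + M * ‖w₂ - w₁‖) ^ 2 * κ⁻¹ ^ 2 *
        ((WithLp.equiv 2 (Fin n → ℝ) (gradient ℓ w₁ - gradient ℓ w₂))
          ⬝ᵥ V⁻¹.mulVec (WithLp.equiv 2 (Fin n → ℝ) (gradient ℓ w₁ - gradient ℓ w₂))) := by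
  set d := w₁ - w₂
  set g := gradient ℓ w₁ - gradient ℓ w₂
  have hgrad : WithLp.equiv 2 (Fin n → ℝ) d ⬝ᵥ WithLp.equiv 2 (Fin n → ℝ) g
      = fderiv ℝ ℓ w₁ d - fderiv ℝ ℓ w₂ d := by
    rw [← inner_gradient_left, ← inner_gradient_left, ← inner_sub_left]
    simp [EuclideanSpace.inner_eq_star_dotProduct, g]
  have hstrong := le_fderiv_add_sub_fderiv_of_le_iteratedFDeriv_two hℓ w₂ d
    (fun t => hlow (w₂ + t • d) d)
  rw [add_sub_cancel, ← hgrad] at hstrong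
  have hcore := hVpd.dotProduct_mulVec_le_inv_sq_mul hκ hstrong
  have hG : 0 ≤ WithLp.equiv 2 (Fin n → ℝ) g ⬝ᵥ V⁻¹ *ᵥ WithLp.equiv 2 (Fin n → ℝ) g := by
    simpa using hVpd.inv.posSemidef.dotProduct_mulVec_nonneg (WithLp.equiv 2 (Fin n → ℝ) g)
  have hfactor : 1 ≤ (1 + M * ‖w₂ - w₁‖) ^ 2 :=
    one_le_pow₀ (le_add_of_nonneg_right (mul_nonneg hM (norm_nonneg _)))
  calc _ ≤ κ⁻¹ ^ 2 * _ := hcore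
    _ ≤ _ := by
      rw [mul_assoc]
      exact le_mul_of_one_le_left (mul_nonneg (by positivity) hG) hfactor

/-- **Bridge inequality relative to a reference matrix.**
If `ℓ : ℝ^n → ℝ` is `C²` and `M ≥ 0` satisfies the self-concordant-like
property `∇²ℓ(y) ⪰ exp(−M ‖y − x‖₂) ∇²ℓ(x)` (stated via quadratic forms),
`V` is symmetric positive definite, and `κ > 0` satisfies `∇²ℓ(w) ⪰ κ V`
for all `w` (again via quadratic forms), then for all `w₁, w₂`,
`‖w₁ − w₂‖²_V ≤ (1 + M ‖w₂ − w₁‖₂)² κ⁻² ‖∇ℓ(w₁) − ∇ℓ(w₂)‖²_{V⁻¹}`. -/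
theorem bridge_reference_matrix
    (n : ℕ) (ℓ : EuclideanSpace ℝ (Fin n) → ℝ) (hℓ : ContDiff ℝ 2 ℓ)
    (M : ℝ) (hM : 0 ≤ M)
    (hsc : ∀ x y v : EuclideanSpace ℝ (Fin n),
      Real.exp (-(M * ‖y - x‖)) * iteratedFDeriv ℝ 2 ℓ x ![v, v]
        ≤ iteratedFDeriv ℝ 2 ℓ y ![v, v])
    (V : Matrix (Fin n) (Fin n) ℝ) (hVpd : V.PosDef)
    (κ : ℝ) (hκ : 0 < κ)
    (hlow : ∀ (w v : EuclideanSpace ℝ (Fin n)),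
      κ * ((WithLp.equiv 2 (Fin n → ℝ) v) ⬝ᵥ V.mulVec (WithLp.equiv 2 (Fin n → ℝ) v))
        ≤ iteratedFDeriv ℝ 2 ℓ w ![v, v])
    (w₁ w₂ : EuclideanSpace ℝ (Fin n)) :
    (WithLp.equiv 2 (Fin n → ℝ) (w₁ - w₂))
        ⬝ᵥ V.mulVec (WithLp.equiv 2 (Fin n → ℝ) (w₁ - w₂))
      ≤ (1 + M * ‖w₂ - w₁‖) ^ 2 * κ⁻¹ ^ 2 *
        ((WithLp.equiv 2 (Fin n → ℝ) (gradient ℓ w₁ - gradient ℓ w₂))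
          ⬝ᵥ V⁻¹.mulVec (WithLp.equiv 2 (Fin n → ℝ) (gradient ℓ w₁ - gradient ℓ w₂))) :=
  bridge_reference_matrix_general n ℓ hℓ M hM V hVpd κ hκ hlow w₁ w₂
end

section
/- From the generalized geometric condition, small loss implies quadratic proximity to the equivalence set: Let W ⊆ ℝ^n, let W* ⊆ W be nonempty, and let ℓ : W → ℝ satisfy ℓ(w) ≥ 0 for all w ∈ W and ℓ(w̃) = 0 for all w̃ ∈ W*. Let μ > 0, τ > 0 and 0 < γ < 2, and suppose that for every w ∈ W there exists w̃ ∈ W* such that min{ (μ/2) ‖w − w̃‖₂², (τ/2) ‖w − w̃‖₂^γ } ≤ ℓ(w). If ŵ ∈ W satisfies ℓ(ŵ) ≤ (τ/2) · (τ/μ)^{γ/(2−γ)}, then there exists w̃ ∈ W* with ‖ŵ − w̃‖₂² ≤ (2/μ) ℓ(ŵ); in particular inf_{w̃ ∈ W*} ‖ŵ − w̃‖₂² ≤ (2/μ) ℓ(ŵ). -/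
/-
The local-strong-convexity branch of the minimum gives the claim directly. In the growth
branch `(τ/2) d^γ ≤ ℓ(ŵ)`, the smallness of `ℓ(ŵ)` forces `d ≤ (τ/μ)^{1/(2-γ)}`, i.e.
`d^{2-γ} ≤ τ/μ`, and on that range the quadratic bound lies below the growth bound:
`μ d² = μ d^{2-γ} d^γ ≤ τ d^γ`.
-/

namespace Real

variable {d c γ : ℝ}

lemma rpow_sub_le_of_rpow_le (hd : 0 ≤ d) (hc : 0 ≤ c) (hγ0 : 0 < γ) (hγ2 : γ < 2)
    (h : d ^ γ ≤ c ^ (γ / (2 - γ))) : d ^ (2 - γ) ≤ c := by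
  have h2γ : 0 < 2 - γ := by linarith
  calc d ^ (2 - γ) = (d ^ γ) ^ ((2 - γ) / γ) := by
        rw [← rpow_mul hd, mul_div_cancel₀ _ hγ0.ne']
    _ ≤ (c ^ (γ / (2 - γ))) ^ ((2 - γ) / γ) := by gcongr
    _ = c := by
        rw [← rpow_mul hc, div_mul_div_comm, mul_comm, div_self (by positivity), rpow_one]

lemma mul_sq_le_mul_rpow_of_rpow_sub_le {μ τ : ℝ} (hμ : 0 < μ) (hd : 0 ≤ d)
    (h : d ^ (2 - γ) ≤ τ / μ) : μ * d ^ 2 ≤ τ * d ^ γ := by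
  have hsplit : d ^ 2 = d ^ (2 - γ) * d ^ γ := by
    rw [← rpow_add' hd (by norm_num), sub_add_cancel, rpow_two]
  calc μ * d ^ 2 = μ * d ^ (2 - γ) * d ^ γ := by rw [hsplit, mul_assoc]
    _ ≤ μ * (τ / μ) * d ^ γ := by gcongr
    _ = τ * d ^ γ := by rw [mul_div_cancel₀ _ hμ.ne']

lemma sq_le_of_min_le_of_le_threshold {μ τ L : ℝ} (hμ : 0 < μ) (hτ : 0 < τ) (hd : 0 ≤ d)
    (hγ0 : 0 < γ) (hγ2 : γ < 2)
    (hmin : min (μ / 2 * d ^ 2) (τ / 2 * d ^ γ) ≤ L)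
    (hL : L ≤ τ / 2 * (τ / μ) ^ (γ / (2 - γ))) :
    d ^ 2 ≤ 2 / μ * L := by
  suffices μ / 2 * d ^ 2 ≤ L by
    rw [div_mul_eq_mul_div, le_div_iff₀ hμ]
    linarith
  rcases min_le_iff.mp hmin with hquad | hgrowth
  · exact hquad
  · have hdγ : d ^ γ ≤ (τ / μ) ^ (γ / (2 - γ)) :=
      le_of_mul_le_mul_left (hgrowth.trans hL) (half_pos hτ)
    have hcomp := mul_sq_le_mul_rpow_of_rpow_sub_le hμ hd
      (rpow_sub_le_of_rpow_le hd (div_pos hτ hμ).le hγ0 hγ2 hdγ)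
    linarith

end Real

theorem geometric_condition_small_loss_proximity_general
    (n : ℕ) (W Wstar : Set (EuclideanSpace ℝ (Fin n)))
    (ℓ : EuclideanSpace ℝ (Fin n) → ℝ)
    (μ τ γ : ℝ) (hμ : 0 < μ) (hτ : 0 < τ) (hγ0 : 0 < γ) (hγ2 : γ < 2)
    (hgeom : ∀ w ∈ W, ∃ wt ∈ Wstar,
      min (μ / 2 * ‖w - wt‖ ^ 2) (τ / 2 * ‖w - wt‖ ^ γ) ≤ ℓ w)
    (what : EuclideanSpace ℝ (Fin n)) (hwhat : what ∈ W)
    (hsmall : ℓ what ≤ τ / 2 * (τ / μ) ^ (γ / (2 - γ))) :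
    (∃ wt ∈ Wstar, ‖what - wt‖ ^ 2 ≤ 2 / μ * ℓ what) ∧
      sInf ((fun wt => ‖what - wt‖ ^ 2) '' Wstar) ≤ 2 / μ * ℓ what := by
  obtain ⟨wt, hwt, hmin⟩ := hgeom what hwhat
  have hclose : ‖what - wt‖ ^ 2 ≤ 2 / μ * ℓ what :=
    Real.sq_le_of_min_le_of_le_threshold hμ hτ (norm_nonneg _) hγ0 hγ2 hmin hsmall
  have hbdd : BddBelow ((fun wt => ‖what - wt‖ ^ 2) '' Wstar) :=
    ⟨0, by rintro _ ⟨_, -, rfl⟩; positivity⟩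
  exact ⟨⟨wt, hwt, hclose⟩, (csInf_le hbdd ⟨wt, hwt, rfl⟩).trans hclose⟩

/-- **Small loss implies quadratic proximity to the equivalence set, under the
generalized geometric condition.**
Let `ℓ ≥ 0` on `W` vanish on a nonempty `W* ⊆ W`, let `μ, τ > 0` and
`0 < γ < 2`, and assume that for every `w ∈ W` there is `w̃ ∈ W*` with
`min{(μ/2)‖w − w̃‖², (τ/2)‖w − w̃‖^γ} ≤ ℓ(w)`. If `ŵ ∈ W` satisfies
`ℓ(ŵ) ≤ (τ/2)(τ/μ)^{γ/(2−γ)}`, then some `w̃ ∈ W*` has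
`‖ŵ − w̃‖² ≤ (2/μ) ℓ(ŵ)`; in particular
`inf_{w̃ ∈ W*} ‖ŵ − w̃‖² ≤ (2/μ) ℓ(ŵ)`. -/
theorem geometric_condition_small_loss_proximity
    (n : ℕ) (W Wstar : Set (EuclideanSpace ℝ (Fin n)))
    (hsub : Wstar ⊆ W) (hne : Wstar.Nonempty)
    (ℓ : EuclideanSpace ℝ (Fin n) → ℝ)
    (hnonneg : ∀ w ∈ W, 0 ≤ ℓ w) (hzero : ∀ w ∈ Wstar, ℓ w = 0)
    (μ τ γ : ℝ) (hμ : 0 < μ) (hτ : 0 < τ) (hγ0 : 0 < γ) (hγ2 : γ < 2)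
    (hgeom : ∀ w ∈ W, ∃ wt ∈ Wstar,
      min (μ / 2 * ‖w - wt‖ ^ 2) (τ / 2 * ‖w - wt‖ ^ γ) ≤ ℓ w)
    (what : EuclideanSpace ℝ (Fin n)) (hwhat : what ∈ W)
    (hsmall : ℓ what ≤ τ / 2 * (τ / μ) ^ (γ / (2 - γ))) :
    (∃ wt ∈ Wstar, ‖what - wt‖ ^ 2 ≤ 2 / μ * ℓ what) ∧
      sInf ((fun wt => ‖what - wt‖ ^ 2) '' Wstar) ≤ 2 / μ * ℓ what :=
  geometric_condition_small_loss_proximity_general n W Wstar ℓ μ τ γ hμ hτ hγ0 hγ2 hgeom what hwhat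
    hsmall
end

section
/- KL-divergence lower bound for MNL choice probabilities: Let K ≥ 1 and C > 0. For a ∈ ℝ^K define p₀(a) := 1/(1 + ∑_{j=1}^K exp(a_j)) and p_i(a) := exp(a_i)/(1 + ∑_{j=1}^K exp(a_j)) for i ∈ {1,…,K}, so that (p₀(a), p₁(a), …, p_K(a)) is a probability vector. Let κ₀ > 0 satisfy p_i(a) · p₀(a) ≥ κ₀ for every a with ‖a‖₂ ≤ C and every i ∈ {1,…,K}. Then for all u, v ∈ ℝ^K with ‖u‖₂ ≤ C and ‖v‖₂ ≤ C, ∑_{i=0}^K p_i(u) · log(p_i(u)/p_i(v)) ≥ (κ₀²/2) · ‖u − v‖₂². -/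
/-!
The left-hand side is the Bregman divergence of the log-partition function
`a ↦ log (1 + ∑ j, exp (a j))` between `v` and `u`. Along a segment its second derivative in
direction `e` is the variance of `e` under the MNL distribution (the outside option paying `0`),
and by Cauchy–Schwarz this variance is at least `p₀ ∑ e_j² p_j ≥ κ₀ ‖e‖²` on the ball. Hence the
divergence is at least `κ₀ / 2 * ‖u - v‖² ≥ κ₀² / 2 * ‖u - v‖²`, as `κ₀ ≤ p_i p₀ ≤ 1`.
-/

open Real Set

theorem tangent_gap_ge_of_le_hasDerivAt2 {f f' f'' : ℝ → ℝ} {a b c : ℝ} (hab : a < b)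
    (hf : ∀ t ∈ Icc a b, HasDerivAt f (f' t) t) (hf' : ∀ t ∈ Icc a b, HasDerivAt f' (f'' t) t)
    (hc : ∀ t ∈ Icc a b, c ≤ f'' t) :
    c / 2 * (b - a) ^ 2 ≤ f a - f b + f' b * (b - a) := by
  -- `f - c t² / 2` is convex, so its secant slope on `[a, b]` is at most its derivative at `b`.
  set g : ℝ → ℝ := fun t => f t - c / 2 * t ^ 2
  have hg : ∀ t ∈ Icc a b, HasDerivAt g (f' t - c * t) t := fun t ht =>
    ((hf t ht).fun_sub ((hasDerivAt_pow 2 t).const_mul (c / 2))).congr_deriv (by ring)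
  have hg' : ∀ t ∈ Icc a b, HasDerivAt (fun t => f' t - c * t) (f'' t - c) t := fun t ht =>
    ((hf' t ht).fun_sub ((hasDerivAt_id t).const_mul c)).congr_deriv (by simp)
  have hconv : ConvexOn ℝ (Icc a b) g := by
    refine convexOn_of_hasDerivWithinAt2_nonneg (f' := fun t => f' t - c * t)
      (f'' := fun t => f'' t - c) (convex_Icc a b)
      (fun t ht => (hg t ht).continuousAt.continuousWithinAt) ?_ ?_ ?_ <;>
    simp only [interior_Icc]
    · exact fun t ht => (hg t (Ioo_subset_Icc_self ht)).hasDerivWithinAt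
    · exact fun t ht => (hg' t (Ioo_subset_Icc_self ht)).hasDerivWithinAt
    · exact fun t ht => sub_nonneg.2 (hc t (Ioo_subset_Icc_self ht))
  have hslope := hconv.slope_le_of_hasDerivAt (left_mem_Icc.2 hab.le) (right_mem_Icc.2 hab.le)
    hab (hg b (right_mem_Icc.2 hab.le))
  rw [slope_def_field, div_le_iff₀ (sub_pos.2 hab)] at hslope
  simp only [g] at hslope
  linarith

section Mnl

variable {ι : Type*}

lemma hasDerivAt_exp_line_apply (v e : ι → ℝ) (j : ι) (t : ℝ) :
    HasDerivAt (fun s : ℝ => exp ((v + s • e) j)) (e j * exp ((v + t • e) j)) t := by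
  simpa [mul_comm] using (((hasDerivAt_id t).mul_const (e j)).const_add (v j)).exp

variable [Fintype ι]

noncomputable def mnlPartition (a : ι → ℝ) : ℝ := 1 + ∑ j, exp (a j)

noncomputable def mnlProbZero (a : ι → ℝ) : ℝ := 1 / mnlPartition a

noncomputable def mnlProb (a : ι → ℝ) (i : ι) : ℝ := exp (a i) / mnlPartition a

lemma mnlPartition_pos (a : ι → ℝ) : 0 < mnlPartition a := by
  unfold mnlPartition; positivity

lemma one_le_mnlPartition (a : ι → ℝ) : 1 ≤ mnlPartition a :=
  le_add_of_nonneg_right (Finset.sum_nonneg fun j _ => (exp_pos (a j)).le)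

lemma exp_lt_mnlPartition (a : ι → ℝ) (i : ι) : exp (a i) < mnlPartition a := by
  have := Finset.single_le_sum (fun j _ => (exp_pos (a j)).le) (Finset.mem_univ i)
  unfold mnlPartition; linarith

lemma mnlProbZero_pos (a : ι → ℝ) : 0 < mnlProbZero a :=
  one_div_pos.2 (mnlPartition_pos a)

lemma mnlProb_pos (a : ι → ℝ) (i : ι) : 0 < mnlProb a i :=
  div_pos (exp_pos _) (mnlPartition_pos a)

lemma mnlProbZero_le_one (a : ι → ℝ) : mnlProbZero a ≤ 1 :=
  (div_le_one (mnlPartition_pos a)).2 (one_le_mnlPartition a)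

lemma mnlProb_le_one (a : ι → ℝ) (i : ι) : mnlProb a i ≤ 1 :=
  (div_le_one (mnlPartition_pos a)).2 (exp_lt_mnlPartition a i).le

lemma sum_mnlProb (a : ι → ℝ) : ∑ i, mnlProb a i = 1 - mnlProbZero a := by
  simp only [mnlProb]
  rw [← Finset.sum_div, mnlProbZero, eq_sub_iff_add_eq, ← add_div, div_eq_one_iff_eq
    (mnlPartition_pos a).ne', mnlPartition, add_comm]

lemma log_mnlProbZero (a : ι → ℝ) : log (mnlProbZero a) = -log (mnlPartition a) := by
  rw [mnlProbZero, one_div, log_inv]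

lemma log_mnlProb (a : ι → ℝ) (i : ι) : log (mnlProb a i) = a i - log (mnlPartition a) := by
  rw [mnlProb, log_div (exp_pos _).ne' (mnlPartition_pos a).ne', log_exp]

lemma sum_mul_exp_div_mnlPartition (a w : ι → ℝ) :
    (∑ j, w j * exp (a j)) / mnlPartition a = ∑ j, w j * mnlProb a j := by
  simp only [Finset.sum_div, mnlProb, mul_div_assoc]

lemma mnl_kl_eq (x y : ι → ℝ) :
    mnlProbZero x * log (mnlProbZero x / mnlProbZero y)
        + ∑ i, mnlProb x i * log (mnlProb x i / mnlProb y i)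
      = log (mnlPartition y) - log (mnlPartition x) + ∑ i, (x i - y i) * mnlProb x i := by
  simp only [log_div (mnlProbZero_pos _).ne' (mnlProbZero_pos _).ne',
    log_div (mnlProb_pos _ _).ne' (mnlProb_pos _ _).ne', log_mnlProbZero, log_mnlProb]
  have hsummand : ∀ i, mnlProb x i * (x i - log (mnlPartition x) - (y i - log (mnlPartition y)))
      = (x i - y i) * mnlProb x i + (log (mnlPartition y) - log (mnlPartition x)) * mnlProb x i :=
    fun i => by ring
  rw [Finset.sum_congr rfl fun i _ => hsummand i, Finset.sum_add_distrib, ← Finset.mul_sum,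
    sum_mnlProb]
  ring

lemma hasDerivAt_log_mnlPartition_line (v e : ι → ℝ) (t : ℝ) :
    HasDerivAt (fun s : ℝ => log (mnlPartition (v + s • e)))
      (∑ j, e j * mnlProb (v + t • e) j) t := by
  rw [← sum_mul_exp_div_mnlPartition]
  exact ((HasDerivAt.fun_sum fun j _ => hasDerivAt_exp_line_apply v e j t).const_add 1).log
    (mnlPartition_pos _).ne'

noncomputable def mnlVariance (a e : ι → ℝ) : ℝ :=
  ∑ j, e j ^ 2 * mnlProb a j - (∑ j, e j * mnlProb a j) ^ 2

lemma hasDerivAt_sum_mul_mnlProb_line (v e : ι → ℝ) (t : ℝ) :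
    HasDerivAt (fun s : ℝ => ∑ j, e j * mnlProb (v + s • e) j) (mnlVariance (v + t • e) e) t := by
  have hS : HasDerivAt (fun s : ℝ => mnlPartition (v + s • e)) (∑ j, e j * exp ((v + t • e) j)) t :=
    (HasDerivAt.fun_sum fun j _ => hasDerivAt_exp_line_apply v e j t).const_add 1
  have hB : HasDerivAt (fun s : ℝ => ∑ j, e j * exp ((v + s • e) j))
      (∑ j, e j ^ 2 * exp ((v + t • e) j)) t :=
    (HasDerivAt.fun_sum fun j _ => (hasDerivAt_exp_line_apply v e j t).const_mul (e j)).congr_deriv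
      (Finset.sum_congr rfl fun j _ => by ring)
  simp only [← sum_mul_exp_div_mnlPartition]
  refine (hB.div hS (mnlPartition_pos _).ne').congr_deriv ?_
  have hS0 := (mnlPartition_pos (v + t • e)).ne'
  rw [mnlVariance, ← sum_mul_exp_div_mnlPartition, ← sum_mul_exp_div_mnlPartition]
  field_simp

lemma mul_sum_sq_le_mnlVariance (a e : ι → ℝ) {κ : ℝ}
    (hκ : ∀ j, κ ≤ mnlProb a j * mnlProbZero a) :
    κ * ∑ j, e j ^ 2 ≤ mnlVariance a e := by
  have hCS : (∑ j, e j * mnlProb a j) ^ 2 ≤ (∑ j, mnlProb a j) * ∑ j, e j ^ 2 * mnlProb a j :=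
    Finset.sum_sq_le_sum_mul_sum_of_sq_le_mul _ (fun j _ => (mnlProb_pos a j).le)
      (fun j _ => mul_nonneg (sq_nonneg _) (mnlProb_pos a j).le) (fun j _ => le_of_eq (by ring))
  have hκ' : κ * ∑ j, e j ^ 2 ≤ mnlProbZero a * ∑ j, e j ^ 2 * mnlProb a j := by
    rw [Finset.mul_sum, Finset.mul_sum]
    exact Finset.sum_le_sum fun j _ => by nlinarith [hκ j, sq_nonneg (e j)]
  rw [sum_mnlProb, sub_mul, one_mul] at hCS
  rw [mnlVariance]
  linarith

lemma half_mul_sum_sq_le_mnl_bregman (x y : ι → ℝ) {κ : ℝ}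
    (hκ : ∀ t ∈ Icc (0 : ℝ) 1, ∀ j,
      κ ≤ mnlProb (y + t • (x - y)) j * mnlProbZero (y + t • (x - y))) :
    κ / 2 * ∑ j, (x j - y j) ^ 2
      ≤ log (mnlPartition y) - log (mnlPartition x) + ∑ j, (x j - y j) * mnlProb x j := by
  have h := tangent_gap_ge_of_le_hasDerivAt2 zero_lt_one
    (fun t _ => hasDerivAt_log_mnlPartition_line y (x - y) t)
    (fun t _ => hasDerivAt_sum_mul_mnlProb_line y (x - y) t)
    (fun t ht => mul_sum_sq_le_mnlVariance _ (x - y) (hκ t ht))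
  simp only [sub_zero, one_pow, mul_one, zero_smul, add_zero, one_smul, add_sub_cancel,
    Pi.sub_apply] at h
  linarith

end Mnl

theorem mnl_kl_lower_bound_general
    (K : ℕ) (C : ℝ)
    (p0 : EuclideanSpace ℝ (Fin K) → ℝ)
    (p : EuclideanSpace ℝ (Fin K) → Fin K → ℝ)
    (hp0 : ∀ a, p0 a = 1 / (1 + ∑ j, Real.exp (a j)))
    (hp : ∀ a i, p a i = Real.exp (a i) / (1 + ∑ j, Real.exp (a j)))
    (κ₀ : ℝ) (hκpos : 0 < κ₀)
    (hκ : ∀ a : EuclideanSpace ℝ (Fin K), ‖a‖ ≤ C → ∀ i, κ₀ ≤ p a i * p0 a)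
    (u v : EuclideanSpace ℝ (Fin K)) (hu : ‖u‖ ≤ C) (hv : ‖v‖ ≤ C) :
    κ₀ ^ 2 / 2 * ‖u - v‖ ^ 2
      ≤ p0 u * Real.log (p0 u / p0 v) + ∑ i, p u i * Real.log (p u i / p v i) := by
  obtain rfl : p0 = fun a => mnlProbZero a.ofLp := funext hp0
  obtain rfl : p = fun a => mnlProb a.ofLp := funext₂ hp
  have hsegment : ∀ t ∈ Icc (0 : ℝ) 1, ∀ j, κ₀ ≤ mnlProb (v.ofLp + t • (u.ofLp - v.ofLp)) j
      * mnlProbZero (v.ofLp + t • (u.ofLp - v.ofLp)) := fun t ht =>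
    hκ (v + t • (u - v)) <| mem_closedBall_zero_iff.1 <|
      (convex_closedBall 0 C).add_smul_sub_mem (mem_closedBall_zero_iff.2 hv)
        (mem_closedBall_zero_iff.2 hu) ht
  have hsq : κ₀ ^ 2 * ∑ j, (u j - v j) ^ 2 ≤ κ₀ * ∑ j, (u j - v j) ^ 2 := by
    rw [Finset.mul_sum, Finset.mul_sum]
    refine Finset.sum_le_sum fun j _ => ?_
    have hκ_le_one : κ₀ ≤ 1 := (hκ u hu j).trans <|
      mul_le_one₀ (mnlProb_le_one _ j) (mnlProbZero_pos _).le (mnlProbZero_le_one _)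
    gcongr
    nlinarith
  rw [mnl_kl_eq, EuclideanSpace.real_norm_sq_eq]
  calc κ₀ ^ 2 / 2 * ∑ j, (u - v) j ^ 2 ≤ κ₀ / 2 * ∑ j, (u j - v j) ^ 2 := by
        simp only [WithLp.ofLp_sub, Pi.sub_apply]; linarith
    _ ≤ _ := half_mul_sum_sq_le_mnl_bregman u.ofLp v.ofLp hsegment

/-- **KL-divergence lower bound for MNL choice probabilities.**
For `a ∈ ℝ^K` let `p₀(a) = 1/(1 + ∑_j exp(a_j))` and
`p_i(a) = exp(a_i)/(1 + ∑_j exp(a_j))`. If `κ₀ > 0` satisfies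
`p_i(a) p₀(a) ≥ κ₀` on the ball of radius `C`, then for all `u, v` in that
ball the KL divergence between the induced distributions on `{0, 1, …, K}`
is at least `(κ₀²/2) ‖u − v‖₂²`. -/
theorem mnl_kl_lower_bound
    (K : ℕ) (hK : 1 ≤ K) (C : ℝ) (hC : 0 < C)
    (p0 : EuclideanSpace ℝ (Fin K) → ℝ)
    (p : EuclideanSpace ℝ (Fin K) → Fin K → ℝ)
    (hp0 : ∀ a, p0 a = 1 / (1 + ∑ j, Real.exp (a j)))
    (hp : ∀ a i, p a i = Real.exp (a i) / (1 + ∑ j, Real.exp (a j)))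
    (κ₀ : ℝ) (hκpos : 0 < κ₀)
    (hκ : ∀ a : EuclideanSpace ℝ (Fin K), ‖a‖ ≤ C → ∀ i, κ₀ ≤ p a i * p0 a)
    (u v : EuclideanSpace ℝ (Fin K)) (hu : ‖u‖ ≤ C) (hv : ‖v‖ ≤ C) :
    κ₀ ^ 2 / 2 * ‖u - v‖ ^ 2
      ≤ p0 u * Real.log (p0 u / p0 v) + ∑ i, p u i * Real.log (p u i / p v i) :=
  mnl_kl_lower_bound_general K C p0 p hp0 hp κ₀ hκpos hκ u v hu hv
end
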